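/- arXiv:2602.07743 — 8 statements merged into one kernel-verified Lean document; each statement's English description precedes it below -/
import Mathlib

section
/- Let m ≥ 2 and let S ⊆ {1, ..., m} be a set such that all sums s + s' (s ≤ s', s, s' ∈ S) are pairwise distinct modulo m − 1. If T is obtained from S by replacing some elements s by s − (m − 1), then all sums t + t' (t ≤ t', t, t' ∈ T) are pairwise distinct as integers; in particular T is a Sidon set. -/
noncomputable def repCount (A : Set ℤ) (n : ℤ) : ℕ :=
  {p : ℤ × ℤ | p.1 ∈ A ∧ p.2 ∈ A ∧ p.1 ≤ p.2 ∧ p.1 + p.2 = n}.ncard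

def UniqueRepBasis (A : Set ℤ) : Prop := ∀ n : ℤ, repCount A n = 1

def IsSidon (S : Set ℤ) : Prop :=
  ∀ a ∈ S, ∀ b ∈ S, ∀ c ∈ S, ∀ d ∈ S, a + b = c + d → (a = c ∧ b = d) ∨ (a = d ∧ b = c)

theorem stmt_2 (m : ℤ) (hm : 2 ≤ m) (S : Set ℤ) (hS : S ⊆ Set.Icc 1 m)
    (hmod : ∀ a ∈ S, ∀ b ∈ S, ∀ c ∈ S, ∀ d ∈ S, a ≤ b → c ≤ d →
      a + b ≡ c + d [ZMOD (m - 1)] → a = c ∧ b = d)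
    (f : ℤ → ℤ) (hf : ∀ s ∈ S, f s = s ∨ f s = s - (m - 1)) :
    (∀ a ∈ S, ∀ b ∈ S, ∀ c ∈ S, ∀ d ∈ S, f a ≤ f b → f c ≤ f d →
      f a + f b = f c + f d → f a = f c ∧ f b = f d) ∧ IsSidon (f '' S) := by
  -- f s ≡ s mod (m-1)
  have hcong : ∀ s ∈ S, f s ≡ s [ZMOD (m - 1)] := by
    intro s hs
    rcases hf s hs with h | h
    · rw [h]
    · rw [h]
      have : (m - 1) ∣ s - (s - (m - 1)) := ⟨1, by ring⟩
      exact (Int.modEq_iff_dvd.mpr this)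
  -- key: multiset equality
  have key : ∀ a ∈ S, ∀ b ∈ S, ∀ c ∈ S, ∀ d ∈ S,
      f a + f b = f c + f d → (a = c ∧ b = d) ∨ (a = d ∧ b = c) := by
    intro a ha b hb c hc d hd hsum
    have hmodeq : a + b ≡ c + d [ZMOD (m - 1)] := by
      have h1 := (hcong a ha).symm.add (hcong b hb).symm
      have h2 := (hcong c hc).add (hcong d hd)
      calc a + b ≡ f a + f b [ZMOD (m-1)] := h1
        _ = f c + f d := hsum
        _ ≡ c + d [ZMOD (m-1)] := h2
    rcases le_total a b with hab | hab <;> rcases le_total c d with hcd | hcd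
    · exact Or.inl (hmod a ha b hb c hc d hd hab hcd hmodeq)
    · have := hmod a ha b hb d hd c hc hab hcd (by rw [add_comm d c]; exact hmodeq)
      exact Or.inr ⟨this.1, this.2⟩
    · have := hmod b hb a ha c hc d hd hab hcd (by rw [add_comm b a]; exact hmodeq)
      exact Or.inr ⟨this.2, this.1⟩
    · have := hmod b hb a ha d hd c hc hab hcd (by rw [add_comm b a, add_comm d c]; exact hmodeq)
      exact Or.inl ⟨this.2, this.1⟩
  constructor
  · intro a ha b hb c hc d hd hab hcd hsum
    rcases key a ha b hb c hc d hd hsum with ⟨h1, h2⟩ | ⟨h1, h2⟩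
    · exact ⟨by rw [h1], by rw [h2]⟩
    · have e1 : f a = f d := by rw [h1]
      have e2 : f b = f c := by rw [h2]
      have : f a = f b := le_antisymm hab (by rw [← e2, ← e1] at hcd; exact hcd)
      constructor
      · rw [this, e2]
      · rw [← this, e1]
  · rintro x ⟨a, ha, rfl⟩ y ⟨b, hb, rfl⟩ z ⟨c, hc, rfl⟩ w ⟨d, hd, rfl⟩ hsum
    rcases key a ha b hb c hc d hd hsum with ⟨h1, h2⟩ | ⟨h1, h2⟩
    · exact Or.inl ⟨by rw [h1], by rw [h2]⟩
    · exact Or.inr ⟨by rw [h1], by rw [h2]⟩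
end

section
/- For every ε with 0 < ε < 1, for all sufficiently large primes p, there exists a Sidon set 𝒮 ⊆ [−p², (−1/2 − ε²/8)p²] ∪ [(1/2 + ε²/8)p², p²] of integers with |𝒮| ≥ (1 − 3ε/4)p. -/
lemma quad_pairs {F : Type*} [Field F] (x1 x2 x3 x4 : F)
    (hs : x1 + x2 = x3 + x4) (hp : x1 * x2 = x3 * x4) :
    (x1 = x3 ∧ x2 = x4) ∨ (x1 = x4 ∧ x2 = x3) := by
  have h : (x3 - x1) * (x3 - x2) = 0 := by linear_combination (-x3) * hs + hp
  rcases mul_eq_zero.mp h with h1 | h1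
  · left
    have h13 : x1 = x3 := by linear_combination -h1
    exact ⟨h13, by linear_combination hs - h13⟩
  · right
    have h23 : x2 = x3 := by linear_combination -h1
    exact ⟨by linear_combination hs - h23, h23⟩

lemma sidon_count (F : Finset ℤ) (D : ℤ) (hD : 0 ≤ D)
    (hsub : ∀ x ∈ F, ∀ y ∈ F, x - y ≤ D)
    (hsid : ∀ a ∈ F, ∀ b ∈ F, ∀ c ∈ F, ∀ d ∈ F, a + b = c + d →
      (a = c ∧ b = d) ∨ (a = d ∧ b = c)) :
    (F.card : ℤ) * (F.card - 1) ≤ 2 * D := by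
  classical
  have hinj : Set.InjOn (fun q : ℤ × ℤ => q.1 - q.2) F.offDiag := by
    rintro ⟨x, y⟩ hxy ⟨z, w⟩ hzw h
    simp only [Finset.mem_coe, Finset.mem_offDiag] at hxy hzw
    have h' : x - y = z - w := h
    have hsum : x + w = z + y := by linarith
    rcases hsid x hxy.1 w hzw.2.1 z hzw.1 y hxy.2.1 hsum with ⟨h1, h2⟩ | ⟨h1, h2⟩
    · exact Prod.ext h1 h2.symm
    · exact absurd h1 hxy.2.2
  have hmap : ∀ q ∈ F.offDiag, (fun q : ℤ × ℤ => q.1 - q.2) q ∈ (Finset.Icc (-D) D).erase 0 := by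
    rintro ⟨x, y⟩ hxy
    simp only [Finset.mem_offDiag] at hxy
    simp only [Finset.mem_erase, Finset.mem_Icc]
    refine ⟨sub_ne_zero.mpr hxy.2.2, ?_, hsub x hxy.1 y hxy.2.1⟩
    have := hsub y hxy.2.1 x hxy.1
    linarith
  have hcard := Finset.card_le_card_of_injOn _ hmap hinj
  have h1 : F.offDiag.card = F.card * F.card - F.card := Finset.offDiag_card F
  have h2 : ((Finset.Icc (-D) D).erase 0).card = (Finset.Icc (-D) D).card - 1 := by
    rw [Finset.card_erase_of_mem]
    simp [hD, neg_nonpos.mpr hD]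
  have h3 : (Finset.Icc (-D) D).card = (2 * D + 1).toNat := by
    rw [Int.card_Icc]; ring_nf
  have h4 : (F.card * F.card - F.card : ℕ) ≤ (2 * D + 1).toNat - 1 := by
    rw [← h1, ← h3, ← h2]; exact hcard
  have h5 : (F.card : ℤ) * F.card - F.card ≤ 2 * D := by
    have := Int.toNat_of_nonneg (by linarith : (0:ℤ) ≤ 2 * D + 1)
    omega
  linarith

lemma ruzsa_sidon (p : ℕ) (hp : p.Prime) (hp3 : 3 ≤ p) :
    ∃ c : ℕ → ZMod (p * (p - 1)),
      ∀ i < p - 1, ∀ j < p - 1, ∀ k < p - 1, ∀ l < p - 1,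
        c i + c j = c k + c l → (i = k ∧ j = l) ∨ (i = l ∧ j = k) := by
  haveI : Fact p.Prime := ⟨hp⟩
  obtain ⟨g, hg⟩ := IsCyclic.exists_generator (α := (ZMod p)ˣ)
  have hord : orderOf g = p - 1 := by
    rw [orderOf_eq_card_of_forall_mem_zpowers hg, Nat.card_eq_fintype_card,
      ZMod.card_units_eq_totient, Nat.totient_prime hp]
  have hcop : Nat.Coprime p (p - 1) := by
    refine (Nat.Prime.coprime_iff_not_dvd hp).mpr (fun hdvd => ?_)
    have := Nat.le_of_dvd (by omega) hdvd
    omega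
  let e := ZMod.chineseRemainder hcop
  refine ⟨fun i => e.symm ((g : ZMod p) ^ i, (i : ZMod (p - 1))), ?_⟩
  intro i hi j hj k hk l hl hsum
  have he : (((g : ZMod p) ^ i + (g : ZMod p) ^ j, ((i : ZMod (p - 1)) + j)) : ZMod p × ZMod (p-1))
      = ((g : ZMod p) ^ k + (g : ZMod p) ^ l, ((k : ZMod (p - 1)) + l)) := by
    have h := congrArg e hsum
    simpa only [map_add, RingEquiv.apply_symm_apply, Prod.mk_add_mk] using h
  have h1 : (g : ZMod p) ^ i + (g : ZMod p) ^ j = (g : ZMod p) ^ k + (g : ZMod p) ^ l :=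
    congrArg Prod.fst he
  have h2 : (i : ZMod (p - 1)) + j = (k : ZMod (p - 1)) + l := congrArg Prod.snd he
  have hmod : (i + j) ≡ (k + l) [MOD p - 1] := by
    have : ((i + j : ℕ) : ZMod (p - 1)) = ((k + l : ℕ) : ZMod (p - 1)) := by
      push_cast; exact h2
    exact (ZMod.natCast_eq_natCast_iff _ _ _).mp this
  have hprodu : g ^ i * g ^ j = g ^ k * g ^ l := by
    rw [← pow_add, ← pow_add]
    exact pow_eq_pow_iff_modEq.mpr (hord ▸ hmod)
  have hprod : (g : ZMod p) ^ i * (g : ZMod p) ^ j = (g : ZMod p) ^ k * (g : ZMod p) ^ l := by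
    exact_mod_cast congrArg Units.val hprodu
  have key : ∀ a < p - 1, ∀ b < p - 1, (g : ZMod p) ^ a = (g : ZMod p) ^ b → a = b := by
    intro a ha b hb hab
    have hu : g ^ a = g ^ b := Units.ext (by exact_mod_cast hab)
    have := pow_eq_pow_iff_modEq.mp hu
    rw [hord] at this
    unfold Nat.ModEq at this
    rwa [Nat.mod_eq_of_lt ha, Nat.mod_eq_of_lt hb] at this
  rcases quad_pairs _ _ _ _ h1 hprod with ⟨ha, hb⟩ | ⟨ha, hb⟩
  · exact Or.inl ⟨key i hi k hk ha, key j hj l hl hb⟩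
  · exact Or.inr ⟨key i hi l hl ha, key j hj k hk hb⟩

set_option maxHeartbeats 1000000 in
theorem stmt_3 (ε : ℝ) (hε0 : 0 < ε) (hε1 : ε < 1) :
    ∃ P : ℕ, ∀ p : ℕ, p.Prime → P ≤ p →
      ∃ S : Set ℤ, IsSidon S ∧
        (∀ s ∈ S, (-(p : ℝ) ^ 2 ≤ (s : ℝ) ∧ (s : ℝ) ≤ (-1 / 2 - ε ^ 2 / 8) * (p : ℝ) ^ 2) ∨
          ((1 / 2 + ε ^ 2 / 8) * (p : ℝ) ^ 2 ≤ (s : ℝ) ∧ (s : ℝ) ≤ (p : ℝ) ^ 2)) ∧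
        (1 - 3 * ε / 4) * (p : ℝ) ≤ (S.ncard : ℝ) := by
  classical
  refine ⟨max 3 ⌈(10000:ℝ) / ε ^ 2⌉₊, fun p hp hPp => ?_⟩
  have hp3 : 3 ≤ p := le_trans (le_max_left _ _) hPp
  have hpbig : (10000:ℝ) / ε ^ 2 ≤ (p : ℝ) :=
    Nat.ceil_le.mp (le_trans (le_max_right _ _) hPp)
  have hppos : (0:ℝ) < p := by positivity
  have hεsq : (10000:ℝ) ≤ ε ^ 2 * p := by
    rw [div_le_iff₀ (by positivity)] at hpbig
    nlinarith
  have hεp : (10000:ℝ) ≤ ε * p := by nlinarith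
  have hp10000 : (10000:ℝ) ≤ p := by nlinarith
  obtain ⟨c, hc⟩ := ruzsa_sidon p hp hp3
  haveI : NeZero (p * (p - 1)) := ⟨Nat.mul_ne_zero (by omega) (by omega)⟩
  have hm_real : ((p * (p - 1) : ℕ) : ℝ) = (p:ℝ) ^ 2 - p := by
    push_cast [Nat.cast_sub (by omega : 1 ≤ p)]
    ring
  have cinj : ∀ i < p - 1, ∀ j < p - 1, c i = c j → i = j := by
    intro i hi j hj h
    rcases hc i hi i hi j hj i hi (by rw [h]) with ⟨h1, _⟩ | ⟨_, h2⟩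
    · exact h1
    · exact h2
  set v : ℕ → ℕ := fun i => (c i).val with hv
  have hvm : ∀ i, v i < p * (p - 1) := fun i => ZMod.val_lt _
  have hvc : ∀ i, ((v i : ℕ) : ZMod (p * (p - 1))) = c i := by
    intro i
    simp [hv, ZMod.natCast_val, ZMod.cast_id]
  set lo : ℝ := (1/2 - ε^2/8) * (p:ℝ)^2 - p with hlo
  set hi : ℝ := (1/2 + ε^2/8) * (p:ℝ)^2 with hhi
  set K : Finset ℕ := (Finset.range (p-1)).filter
    (fun i => ((v i : ℝ) ≤ lo ∨ hi ≤ (v i : ℝ))) with hK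
  set B : Finset ℕ := (Finset.range (p-1)).filter
    (fun i => ¬((v i : ℝ) ≤ lo ∨ hi ≤ (v i : ℝ))) with hB
  have hKB : K.card + B.card = p - 1 := by
    rw [hK, hB, Finset.card_filter_add_card_filter_not, Finset.card_range]
  set s : ℕ → ℤ := fun i => if hi ≤ (v i : ℝ) then (v i : ℤ) else (v i : ℤ) - (p * (p - 1) : ℕ)
    with hs
  have hsmod : ∀ i, ((s i : ℤ) : ZMod (p * (p - 1))) = c i := by
    intro i
    rw [hs]
    by_cases h : hi ≤ (v i : ℝ)
    · simp only [if_pos h]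
      rw [Int.cast_natCast]
      exact hvc i
    · simp only [if_neg h]
      rw [Int.cast_sub, Int.cast_natCast, Int.cast_natCast, ZMod.natCast_self, sub_zero]
      exact hvc i
  have hsinj : ∀ i < p - 1, ∀ j < p - 1, s i = s j → i = j := by
    intro i hip j hjp h
    apply cinj i hip j hjp
    rw [← hsmod i, ← hsmod j, h]
  refine ⟨↑(K.image s), ?_, ?_, ?_⟩
  · -- Sidon
    intro a ha b hb c' hc' d hd hsum
    simp only [Finset.coe_image, Set.mem_image, Finset.mem_coe] at ha hb hc' hd
    obtain ⟨i, hiK, rfl⟩ := ha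
    obtain ⟨j, hjK, rfl⟩ := hb
    obtain ⟨k, hkK, rfl⟩ := hc'
    obtain ⟨l, hlK, rfl⟩ := hd
    have hip := Finset.mem_range.mp (Finset.mem_filter.mp hiK).1
    have hjp := Finset.mem_range.mp (Finset.mem_filter.mp hjK).1
    have hkp := Finset.mem_range.mp (Finset.mem_filter.mp hkK).1
    have hlp := Finset.mem_range.mp (Finset.mem_filter.mp hlK).1
    have hcsum : c i + c j = c k + c l := by
      have h' : ((s i + s j : ℤ) : ZMod (p * (p - 1)))
          = ((s k + s l : ℤ) : ZMod (p * (p - 1))) := by rw [hsum]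
      rw [Int.cast_add, Int.cast_add, hsmod, hsmod, hsmod, hsmod] at h'
      exact h'
    rcases hc i hip j hjp k hkp l hlp hcsum with ⟨h1, h2⟩ | ⟨h1, h2⟩
    · exact Or.inl ⟨by rw [h1], by rw [h2]⟩
    · exact Or.inr ⟨by rw [h1], by rw [h2]⟩
  · -- bounds
    intro x hx
    simp only [Finset.coe_image, Set.mem_image, Finset.mem_coe] at hx
    obtain ⟨i, hiK, rfl⟩ := hx
    have hfilt := (Finset.mem_filter.mp hiK).2
    have hv0 : (0:ℝ) ≤ (v i : ℝ) := Nat.cast_nonneg _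
    have hvltm : (v i : ℝ) < (p:ℝ)^2 - p := by
      rw [← hm_real]; exact_mod_cast hvm i
    by_cases h : hi ≤ (v i : ℝ)
    · right
      have hsx : s i = (v i : ℤ) := by rw [hs]; simp [h]
      rw [hsx]
      constructor
      · rw [hhi] at h; push_cast; linarith
      · push_cast; linarith
    · left
      have hvlo : (v i : ℝ) ≤ lo := by tauto
      have hsx : s i = (v i : ℤ) - (p * (p - 1) : ℕ) := by rw [hs]; simp [h]
      rw [hsx]
      rw [hlo] at hvlo
      have hprod : (p:ℝ) * ((p - 1 : ℕ):ℝ) = (p:ℝ)^2 - (p:ℝ) := by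
        rw [Nat.cast_sub (by omega : 1 ≤ p)]; ring
      constructor
      · push_cast; linarith
      · push_cast; linarith
  · -- cardinality
    have hcard : (K.image s).card = K.card := by
      apply Finset.card_image_of_injOn
      intro i hiK j hjK h
      exact hsinj i (Finset.mem_range.mp (Finset.mem_filter.mp hiK).1)
        j (Finset.mem_range.mp (Finset.mem_filter.mp hjK).1) h
    rw [Set.ncard_coe_finset, hcard]
    -- bound on B.card
    set Fb : Finset ℤ := B.image (fun i => (v i : ℤ)) with hFb
    have hFbcard : Fb.card = B.card := by
      apply Finset.card_image_of_injOn
      intro i hiB j hjB h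
      have hz : (v i : ℤ) = (v j : ℤ) := h
      have h' : v i = v j := by exact_mod_cast hz
      exact cinj i (Finset.mem_range.mp (Finset.mem_filter.mp hiB).1)
        j (Finset.mem_range.mp (Finset.mem_filter.mp hjB).1)
        (by rw [← hvc i, ← hvc j, h'])
    set D : ℤ := ⌈(ε^2/4) * (p:ℝ)^2 + p⌉ with hD
    have hD0 : (0:ℤ) ≤ D := Int.ceil_nonneg (by positivity)
    have hmemB : ∀ x ∈ Fb, lo < (x:ℝ) ∧ (x:ℝ) < hi := by
      intro x hx
      simp only [hFb, Finset.mem_image] at hx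
      obtain ⟨i, hiB, rfl⟩ := hx
      have hfilt := (Finset.mem_filter.mp hiB).2
      push_neg at hfilt
      constructor
      · exact_mod_cast hfilt.1
      · exact_mod_cast hfilt.2
    have hsub : ∀ x ∈ Fb, ∀ y ∈ Fb, x - y ≤ D := by
      intro x hx y hy
      have h1 := (hmemB x hx).2
      have h2 := (hmemB y hy).1
      have hceil : (ε^2/4) * (p:ℝ)^2 + p ≤ (D:ℝ) := Int.le_ceil _
      have hr : ((x - y : ℤ) : ℝ) ≤ (D : ℝ) := by
        rw [hhi] at h1
        rw [hlo] at h2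
        push_cast
        linarith
      exact_mod_cast hr
    have hsidF : ∀ a ∈ Fb, ∀ b ∈ Fb, ∀ c' ∈ Fb, ∀ d ∈ Fb, a + b = c' + d →
        (a = c' ∧ b = d) ∨ (a = d ∧ b = c') := by
      intro a ha b hb c' hc' d hd hsum
      simp only [hFb, Finset.mem_image] at ha hb hc' hd
      obtain ⟨i, hiB, rfl⟩ := ha
      obtain ⟨j, hjB, rfl⟩ := hb
      obtain ⟨k, hkB, rfl⟩ := hc'
      obtain ⟨l, hlB, rfl⟩ := hd
      have hip := Finset.mem_range.mp (Finset.mem_filter.mp hiB).1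
      have hjp := Finset.mem_range.mp (Finset.mem_filter.mp hjB).1
      have hkp := Finset.mem_range.mp (Finset.mem_filter.mp hkB).1
      have hlp := Finset.mem_range.mp (Finset.mem_filter.mp hlB).1
      have hcsum : c i + c j = c k + c l := by
        rw [← hvc i, ← hvc j, ← hvc k, ← hvc l]
        have h' : v i + v j = v k + v l := by exact_mod_cast hsum
        have h'' : ((v i + v j : ℕ) : ZMod (p * (p - 1)))
            = ((v k + v l : ℕ) : ZMod (p * (p - 1))) := by rw [h']
        push_cast at h''
        exact h''
      rcases hc i hip j hjp k hkp l hlp hcsum with ⟨h1, h2⟩ | ⟨h1, h2⟩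
      · exact Or.inl ⟨by rw [h1], by rw [h2]⟩
      · exact Or.inr ⟨by rw [h1], by rw [h2]⟩
    have hcount := sidon_count Fb D hD0 hsub hsidF
    set k : ℕ := B.card with hk
    rw [hFbcard] at hcount
    have hDreal : (D : ℝ) < (ε^2/4) * (p:ℝ)^2 + p + 1 := by
      rw [hD]; exact Int.ceil_lt_add_one _
    have hcountR : (k:ℝ) * ((k:ℝ) - 1) ≤ 2 * ((ε^2/4) * (p:ℝ)^2 + p + 1) := by
      have h2 : ((k:ℤ) : ℝ) * (((k:ℤ):ℝ) - 1) ≤ 2 * ((D:ℤ):ℝ) := by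
        exact_mod_cast hcount
      push_cast at h2 ⊢
      linarith
    have hk0 : (0:ℝ) ≤ (k:ℝ) := Nat.cast_nonneg _
    have hkbound : (k:ℝ) ≤ (3/4) * ε * p - 1 := by
      by_contra hcon
      push_neg at hcon
      nlinarith [hεsq, hεp, hp10000, mul_pos hε0 hppos,
        mul_le_mul_of_nonneg_left hεsq (le_of_lt hppos),
        mul_le_mul_of_nonneg_left hεp (le_of_lt hε0)]
    have hKreal : (K.card : ℝ) = (p:ℝ) - 1 - k := by
      have hcast : ((K.card + B.card : ℕ) : ℝ) = ((p - 1 : ℕ) : ℝ) := by rw [hKB]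
      push_cast [Nat.cast_sub (by omega : 1 ≤ p)] at hcast
      rw [← hk] at hcast
      linarith
    rw [hKreal]
    linarith
end

section
/- Let A ⊆ ℤ be finite with r_A(n) ≤ 1 for all n ∈ ℤ, 0 ∉ A, and let a* be the maximum absolute value of elements of A. Let m be an integer, set b = 4|a*| + |m|, and let B = A ∪ {−b, b + m}. Then r_B(n) ≤ 1 for all n ∈ ℤ, r_B(m) = 1, and 0 ∉ B. -/
theorem stmt_6 (A : Set ℤ) (hfin : A.Finite) (hne : A.Nonempty)
    (hA : ∀ n : ℤ, repCount A n ≤ 1) (h0 : (0 : ℤ) ∉ A)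
    (astar : ℤ) (hstar : astar ∈ A) (hmax : ∀ a ∈ A, |a| ≤ |astar|)
    (m : ℤ) (hm : m ≠ 0) (hrm : repCount A m = 0)
    (b : ℤ) (hb : b = 4 * |astar| + |m|) :
    (∀ n : ℤ, repCount (A ∪ {-b, b + m}) n ≤ 1) ∧
    repCount (A ∪ {-b, b + m}) m = 1 ∧ (0 : ℤ) ∉ A ∪ {-b, b + m} := by
  obtain ⟨s, t, hs1, ht1, hmt1, hmt2, hbst, hbd⟩ :
      ∃ s t : ℤ, 1 ≤ s ∧ 1 ≤ t ∧ -t ≤ m ∧ m ≤ t ∧ b = 4 * s + t ∧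
        ∀ x ∈ A, -s ≤ x ∧ x ≤ s := by
    refine ⟨|astar|, |m|, ?_, ?_, ?_, ?_, hb, fun x hx => abs_le.mp (hmax x hx)⟩
    · exact abs_pos.mpr (fun h => h0 (h ▸ hstar))
    · exact abs_pos.mpr hm
    · exact neg_abs_le m
    · exact le_abs_self m
  have hfinP : ∀ n : ℤ,
      ({p : ℤ × ℤ | p.1 ∈ A ∧ p.2 ∈ A ∧ p.1 ≤ p.2 ∧ p.1 + p.2 = n}).Finite := by
    intro n
    apply Set.Finite.subset (hfin.prod hfin)
    rintro ⟨x, y⟩ ⟨h1, h2, -, -⟩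
    exact ⟨h1, h2⟩
  have hAsub : ∀ n : ℤ,
      Set.Subsingleton {p : ℤ × ℤ | p.1 ∈ A ∧ p.2 ∈ A ∧ p.1 ≤ p.2 ∧ p.1 + p.2 = n} := by
    intro n p hp q hq
    exact (Set.ncard_le_one (hfinP n)).mp (hA n) p hp q hq
  have hrm' : ∀ x y : ℤ, x ∈ A → y ∈ A → x ≤ y → x + y ≠ m := by
    intro x y hx hy hxy hsum
    have he : {p : ℤ × ℤ | p.1 ∈ A ∧ p.2 ∈ A ∧ p.1 ≤ p.2 ∧ p.1 + p.2 = m} = ∅ :=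
      (Set.ncard_eq_zero (hfinP m)).mp hrm
    have : (x, y) ∈ {p : ℤ × ℤ | p.1 ∈ A ∧ p.2 ∈ A ∧ p.1 ≤ p.2 ∧ p.1 + p.2 = m} :=
      ⟨hx, hy, hxy, hsum⟩
    rw [he] at this
    exact this
  have hBsub : ∀ n : ℤ, Set.Subsingleton
      {p : ℤ × ℤ | p.1 ∈ A ∪ {-b, b + m} ∧ p.2 ∈ A ∪ {-b, b + m} ∧ p.1 ≤ p.2 ∧
        p.1 + p.2 = n} := by
    rintro n ⟨x1, x2⟩ ⟨hx1, hx2, hxle, hxs⟩ ⟨y1, y2⟩ ⟨hy1, hy2, hyle, hys⟩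
    simp only [Set.mem_union, Set.mem_insert_iff, Set.mem_singleton_iff] at hx1 hx2 hy1 hy2
    simp only at hxle hxs hyle hys
    rw [Prod.mk.injEq]
    rcases hx1 with hx1 | rfl | rfl <;> rcases hx2 with hx2 | rfl | rfl <;>
      rcases hy1 with hy1 | rfl | rfl <;> rcases hy2 with hy2 | rfl | rfl <;>
    · try have hbx1 := hbd _ hx1
      try have hbx2 := hbd _ hx2
      try have hby1 := hbd _ hy1
      try have hby2 := hbd _ hy2
      first
      | omega
      | exact Prod.mk.injEq _ _ _ _ ▸
          (hAsub n ⟨hx1, hx2, hxle, hxs⟩ ⟨hy1, hy2, hyle, hys⟩)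
      | exact absurd (show x1 + x2 = m by omega) (hrm' x1 x2 hx1 hx2 hxle)
      | exact absurd (show y1 + y2 = m by omega) (hrm' y1 y2 hy1 hy2 hyle)
  refine ⟨?_, ?_, ?_⟩
  · intro n
    unfold repCount
    rcases (hBsub n).eq_empty_or_singleton with h | ⟨a, h⟩ <;> rw [h] <;> simp
  · unfold repCount
    have hmem : (-b, b + m) ∈
        {p : ℤ × ℤ | p.1 ∈ A ∪ {-b, b + m} ∧ p.2 ∈ A ∪ {-b, b + m} ∧ p.1 ≤ p.2 ∧
          p.1 + p.2 = m} := by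
      refine ⟨Or.inr (Or.inl rfl), Or.inr (Or.inr rfl), by omega, by omega⟩
    rw [(hBsub m).eq_singleton_of_mem hmem]
    simp
  · simp only [Set.mem_union, Set.mem_insert_iff, Set.mem_singleton_iff]
    push_neg
    exact ⟨h0, by omega, by omega⟩
end

section
/- Let A ⊆ ℤ be finite with r_A(n) ≤ 1 for all n ∈ ℤ, let a* = max{|a| : a ∈ A}, and let S be a finite Sidon set of integers such that: (i) every element s ∈ S satisfies |s| ≥ 8(a*)⁴ and |s| > 3a*; (ii) no two distinct elements s, s' ∈ S satisfy s − s' ∈ A − A; (iii) no two distinct elements s, s' ∈ S satisfy s + s' ∈ 2A; (iv) for any three elements s, s', s'' ∈ S, |s + s' − s''| > a*. Then the union A ∪ S satisfies r_{A∪S}(n) ≤ 1 for all n ∈ ℤ. -/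
theorem stmt_8 (A : Set ℤ) (hfin : A.Finite) (hA : ∀ n : ℤ, repCount A n ≤ 1)
    (astar : ℤ) (hmax : ∀ a ∈ A, |a| ≤ astar)
    (S : Set ℤ) (hSfin : S.Finite) (hSidon : IsSidon S)
    (h1 : ∀ s ∈ S, 8 * astar ^ 4 ≤ |s| ∧ 3 * astar < |s|)
    (h2 : ∀ s ∈ S, ∀ s' ∈ S, s ≠ s' → s - s' ∉ {x : ℤ | ∃ a ∈ A, ∃ a' ∈ A, x = a - a'})
    (h3 : ∀ s ∈ S, ∀ s' ∈ S, s ≠ s' → s + s' ∉ {x : ℤ | ∃ a ∈ A, ∃ a' ∈ A, x = a + a'})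
    (h4 : ∀ s ∈ S, ∀ s' ∈ S, ∀ s'' ∈ S, astar < |s + s' - s''|) :
    ∀ n : ℤ, repCount (A ∪ S) n ≤ 1 := by
  -- helper lemmas
  have mixed : ∀ x ∈ A, ∀ s ∈ S, ∀ y ∈ A, ∀ t ∈ S, x + s = y + t → x = y ∧ s = t := by
    intro x hx s hs y hy t ht heq
    by_cases hst : s = t
    · constructor; · omega
      · exact hst
    · exact absurd ⟨y, hy, x, hx, by omega⟩ (h2 s hs t ht hst)
  have sizeAS : ∀ a ∈ A, ∀ b ∈ A, ∀ y ∈ A, ∀ t ∈ S, a + b = y + t → False := by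
    intro a ha b hb y hy t ht heq
    have h1t := (h1 t ht).2
    have := hmax a ha; have := hmax b hb; have := hmax y hy
    have := abs_le.mp (hmax a ha); have := abs_le.mp (hmax b hb)
    have := abs_le.mp (hmax y hy)
    have : |t| ≤ 3 * astar := by
      rw [abs_le]; omega
    omega
  have sizeASS : ∀ a ∈ A, ∀ b ∈ A, ∀ t ∈ S, ∀ t' ∈ S, a + b = t + t' → False := by
    intro a ha b hb t ht t' ht' heq
    by_cases htt : t = t'
    · subst htt
      have h1t := (h1 t ht).2
      have := abs_le.mp (hmax a ha); have := abs_le.mp (hmax b hb)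
      have h0 : (0:ℤ) ≤ astar := le_trans (abs_nonneg a) (hmax a ha)
      rcases abs_cases t with ⟨hc, _⟩ | ⟨hc, _⟩ <;> omega
    · exact absurd ⟨a, ha, b, hb, by omega⟩ (h3 t ht t' ht' htt)
  have sizeMSS : ∀ x ∈ A, ∀ s ∈ S, ∀ t ∈ S, ∀ t' ∈ S, x + s = t + t' → False := by
    intro x hx s hs t ht t' ht' heq
    have h4' := h4 t ht t' ht' s hs
    have := hmax x hx
    have : |t + t' - s| = |x| := by rw [show t + t' - s = x by omega]
    omega
  -- key uniqueness
  intro n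
  have key : ∀ a ∈ A ∪ S, ∀ b ∈ A ∪ S, ∀ c ∈ A ∪ S, ∀ d ∈ A ∪ S,
      a ≤ b → c ≤ d → a + b = n → c + d = n → a = c ∧ b = d := by
    intro a ha b hb c hc d hd hab hcd han hcn
    have heq : a + b = c + d := by omega
    rcases ha with ha | ha <;> rcases hb with hb | hb <;>
      rcases hc with hc | hc <;> rcases hd with hd | hd
    · -- AAAA : use hA
      have hTA : {p : ℤ × ℤ | p.1 ∈ A ∧ p.2 ∈ A ∧ p.1 ≤ p.2 ∧ p.1 + p.2 = n}.Finite := by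
        apply Set.Finite.subset (hfin.prod hfin)
        rintro ⟨x, y⟩ ⟨h1, h2, _, _⟩; exact ⟨h1, h2⟩
      have hA' : {p : ℤ × ℤ | p.1 ∈ A ∧ p.2 ∈ A ∧ p.1 ≤ p.2 ∧ p.1 + p.2 = n}.ncard ≤ 1 := hA n
      have := ((Set.ncard_le_one_iff hTA).mp hA')
        (show ((a, b) : ℤ × ℤ) ∈ _ from ⟨ha, hb, hab, han⟩)
        (show ((c, d) : ℤ × ℤ) ∈ _ from ⟨hc, hd, hcd, hcn⟩)
      exact ⟨congrArg Prod.fst this, congrArg Prod.snd this⟩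
    · exact absurd heq (fun h => sizeAS a ha b hb c hc d hd h)
    · exact absurd heq (fun h => sizeAS a ha b hb d hd c hc (by omega))
    · exact absurd heq (fun h => sizeASS a ha b hb c hc d hd h)
    · exact absurd heq.symm (fun h => sizeAS c hc d hd a ha b hb h)
    · obtain ⟨h', h''⟩ := mixed a ha b hb c hc d hd heq
      exact ⟨h', h''⟩
    · obtain ⟨h', h''⟩ := mixed a ha b hb d hd c hc (by omega)
      omega
    · exact absurd heq (fun h => sizeMSS a ha b hb c hc d hd h)
    · exact absurd heq.symm (fun h => sizeAS c hc d hd b hb a ha (by omega))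
    · obtain ⟨h', h''⟩ := mixed b hb a ha c hc d hd (by omega)
      omega
    · obtain ⟨h', h''⟩ := mixed b hb a ha d hd c hc (by omega)
      omega
    · exact absurd (show b + a = c + d by omega) (fun h => sizeMSS b hb a ha c hc d hd h)
    · exact absurd heq.symm (fun h => sizeASS c hc d hd a ha b hb h)
    · exact absurd (show c + d = a + b by omega) (fun h => sizeMSS c hc d hd a ha b hb h)
    · exact absurd (show d + c = a + b by omega) (fun h => sizeMSS d hd c hc a ha b hb h)
    · rcases hSidon a ha b hb c hc d hd heq with ⟨h', h''⟩ | ⟨h', h''⟩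
      · exact ⟨h', h''⟩
      · omega
  have hsub : {p : ℤ × ℤ | p.1 ∈ A ∪ S ∧ p.2 ∈ A ∪ S ∧ p.1 ≤ p.2 ∧ p.1 + p.2 = n}.Subsingleton := by
    rintro ⟨a, b⟩ ⟨ha, hb, hab, han⟩ ⟨c, d⟩ ⟨hc, hd, hcd, hcn⟩
    obtain ⟨h', h''⟩ := key a ha b hb c hc d hd hab hcd han hcn
    simp [h', h'']
  have hrw : repCount (A ∪ S) n
      = {p : ℤ × ℤ | p.1 ∈ A ∪ S ∧ p.2 ∈ A ∪ S ∧ p.1 ≤ p.2 ∧ p.1 + p.2 = n}.ncard := rfl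
  rcases hsub.eq_empty_or_singleton with h | ⟨x, h⟩ <;> rw [hrw, h] <;> simp
end

section
/- For every ε > 0 there exists a unique representation basis A of ℤ such that A(−x, x) ≥ (1 − ε)√x for infinitely many positive integers x. Consequently c_𝒜 ≥ 1, where c_𝒜 = sup over unique representation bases A of limsup_{x→∞} A(−x,x)/√x. -/
open Finset
open scoped Pointwise

def IsSidonSet {G : Type*} [Add G] (S : Set G) : Prop :=
  ∀ a ∈ S, ∀ b ∈ S, ∀ c ∈ S, ∀ d ∈ S, a + b = c + d → (a = c ∧ b = d) ∨ (a = d ∧ b = c)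

theorem IsSidonSet.image_of_leftInverse {G H : Type*} [AddZeroClass G] [AddZeroClass H]
    (f : H →+ G) {ρ : G → H} (hρ : Function.LeftInverse f ρ) {S : Set G} (hS : IsSidonSet S) :
    IsSidonSet (ρ '' S) := by
  rintro _ ⟨a, ha, rfl⟩ _ ⟨b, hb, rfl⟩ _ ⟨c, hc, rfl⟩ _ ⟨d, hd, rfl⟩ h
  have h' : a + b = c + d := by simpa only [map_add, hρ _] using congrArg f h
  exact (hS a ha b hb c hc d hd h').imp (And.imp (congrArg ρ) (congrArg ρ))
    (And.imp (congrArg ρ) (congrArg ρ))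

theorem eq_and_eq_or_of_add_mul_add_eq {k K : Type*} [Field k] [Field K] [Algebra k K] {θ : K}
    (hθ : θ ∉ Set.range (algebraMap k K)) {a b c d : k}
    (h : (θ + algebraMap k K a) * (θ + algebraMap k K b) =
      (θ + algebraMap k K c) * (θ + algebraMap k K d)) :
    (a = c ∧ b = d) ∨ (a = d ∧ b = c) := by
  have hlin : algebraMap k K (a + b - c - d) * θ = algebraMap k K (c * d - a * b) := by
    simp only [map_add, map_sub, map_mul]
    linear_combination h
  have hsum : a + b = c + d := by
    by_contra hne
    have hne' : algebraMap k K (a + b - c - d) ≠ 0 :=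
      (map_ne_zero _).2 fun h0 => hne (by linear_combination h0)
    exact hθ ⟨(c * d - a * b) / (a + b - c - d), by
      rw [map_div₀, ← hlin, mul_div_cancel_left₀ _ hne']⟩
  have hprod : c * d - a * b = 0 := by
    rw [← map_eq_zero (algebraMap k K), ← hlin, show a + b - c - d = 0 by
      linear_combination hsum, map_zero, zero_mul]
  have hfactor : (a - c) * (a - d) = 0 := by linear_combination a * hsum + hprod
  rcases mul_eq_zero.1 hfactor with h1 | h1
  · exact Or.inl ⟨by linear_combination h1, by linear_combination hsum - h1⟩
  · exact Or.inr ⟨by linear_combination h1, by linear_combination hsum - h1⟩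

theorem exists_isSidonSet_zmod_card_units {k K : Type*} [Field k] [Finite k] [Field K] [Finite K]
    [Algebra k K] {θ : K} (hθ : θ ∉ Set.range (algebraMap k K)) :
    ∃ T : Finset (ZMod (Nat.card Kˣ)),
      T.card = Nat.card k ∧ IsSidonSet (T : Set (ZMod (Nat.card Kˣ))) := by
  have : Fintype k := Fintype.ofFinite k
  have hne : ∀ a : k, θ + algebraMap k K a ≠ 0 := fun a h =>
    hθ ⟨-a, by rw [map_neg]; linear_combination -h⟩
  let e := zmodCyclicMulEquiv (inferInstance : IsCyclic Kˣ)
  let φ : k → ZMod (Nat.card Kˣ) := fun a => Multiplicative.toAdd (e.symm (Units.mk0 _ (hne a)))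
  have hφ : ∀ a b c d, φ a + φ b = φ c + φ d → (a = c ∧ b = d) ∨ (a = d ∧ b = c) := by
    intro a b c d h
    have hu : Units.mk0 _ (hne a) * Units.mk0 _ (hne b) = Units.mk0 _ (hne c) * Units.mk0 _ (hne d) := by
      apply e.symm.injective
      apply Multiplicative.toAdd.injective
      rw [map_mul e.symm, map_mul e.symm, toAdd_mul, toAdd_mul]
      exact h
    exact eq_and_eq_or_of_add_mul_add_eq hθ (by simpa using congrArg Units.val hu)
  have hinj : Function.Injective φ := fun a b h => by
    rcases hφ a a b a (by rw [h]) with ⟨hab, -⟩ | ⟨-, hab⟩ <;> exact hab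
  refine ⟨univ.image φ, by rw [card_image_of_injective _ hinj, card_univ, Nat.card_eq_fintype_card], ?_⟩
  simp only [coe_image, coe_univ, Set.image_univ]
  rintro _ ⟨a, rfl⟩ _ ⟨b, rfl⟩ _ ⟨c, rfl⟩ _ ⟨d, rfl⟩ h
  exact (hφ a b c d h).imp (And.imp (congrArg φ) (congrArg φ)) (And.imp (congrArg φ) (congrArg φ))

theorem exists_isSidonSet_zmod_sq_sub_one (p : ℕ) [Fact p.Prime] :
    ∃ T : Finset (ZMod (p ^ 2 - 1)), T.card = p ∧ IsSidonSet (T : Set (ZMod (p ^ 2 - 1))) := by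
  have hK : Nat.card (GaloisField p 2) = p ^ 2 := GaloisField.card p 2 two_ne_zero
  obtain ⟨θ, hθ⟩ : ∃ θ : GaloisField p 2, θ ∉ Set.range (algebraMap (ZMod p) _) := by
    by_contra! h
    have hle := Nat.card_le_card_of_surjective _ h
    rw [hK, Nat.card_zmod] at hle
    nlinarith [(Fact.out : p.Prime).two_le]
  have := exists_isSidonSet_zmod_card_units hθ
  rwa [Nat.card_units, hK, Nat.card_zmod] at this

def annularRep (m : ℕ) (y : ZMod m) : ℤ := if m / 2 ≤ y.val then y.val else y.val - m

theorem intCast_annularRep {m : ℕ} [NeZero m] (y : ZMod m) :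
    ((annularRep m y : ℤ) : ZMod m) = y := by
  unfold annularRep
  split_ifs <;> simp

theorem abs_annularRep {m : ℕ} [NeZero m] (y : ZMod m) :
    ((m / 2 : ℕ) : ℤ) ≤ |annularRep m y| ∧ |annularRep m y| ≤ m := by
  have := ZMod.val_lt y
  unfold annularRep
  split_ifs with h
  · rw [abs_of_nonneg (by positivity)]
    omega
  · rw [abs_of_neg (by omega)]
    omega

theorem exists_isSidon_annulus {m : ℕ} [NeZero m] {T : Finset (ZMod m)}
    (hT : IsSidonSet (T : Set (ZMod m))) :
    ∃ U : Finset ℤ, IsSidon ↑U ∧ U.card = T.card ∧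
      ∀ u ∈ U, ((m / 2 : ℕ) : ℤ) ≤ |u| ∧ |u| ≤ m := by
  have hinv : Function.LeftInverse (Int.castAddHom (ZMod m)) (annularRep m) := intCast_annularRep
  refine ⟨T.image (annularRep m), ?_, card_image_of_injective _ hinv.injective, ?_⟩
  · rw [coe_image]
    exact hT.image_of_leftInverse _ hinv
  · intro u hu
    obtain ⟨y, -, rfl⟩ := mem_image.1 hu
    exact abs_annularRep y

theorem IsSidon.mono {S S' : Set ℤ} (h : S ⊆ S') (hS' : IsSidon S') : IsSidon S :=
  fun a ha b hb c hc d hd => hS' a (h ha) b (h hb) c (h hc) d (h hd)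

theorem isSidon_pair (u v : ℤ) : IsSidon ↑({u, v} : Finset ℤ) := by
  intro a ha b hb c hc d hd h
  simp only [coe_insert, coe_singleton, Set.mem_insert_iff, Set.mem_singleton_iff] at ha hb hc hd
  rcases ha with rfl | rfl <;> rcases hb with rfl | rfl <;>
    rcases hc with rfl | rfl <;> rcases hd with rfl | rfl <;> omega

theorem isSidon_iUnion {F : ℕ → Set ℤ} (hmono : Monotone F) (hF : ∀ k, IsSidon (F k)) :
    IsSidon (⋃ k, F k) := by
  intro a ha b hb c hc d hd
  obtain ⟨i, ha⟩ := Set.mem_iUnion.1 ha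
  obtain ⟨j, hb⟩ := Set.mem_iUnion.1 hb
  obtain ⟨k, hc⟩ := Set.mem_iUnion.1 hc
  obtain ⟨l, hd⟩ := Set.mem_iUnion.1 hd
  set N := max (max i j) (max k l)
  have hN : i ≤ N ∧ j ≤ N ∧ k ≤ N ∧ l ≤ N := by omega
  exact hF N a (hmono hN.1 ha) b (hmono hN.2.1 hb) c (hmono hN.2.2.1 hc) d (hmono hN.2.2.2 hd)

theorem IsSidon.uniqueRepBasis {A : Set ℤ} (hA : IsSidon A) (hrep : ∀ n, n ∈ A + A) :
    UniqueRepBasis A := by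
  intro n
  obtain ⟨a, ha, b, hb, hab⟩ := Set.mem_add.1 (hrep n)
  wlog hle : a ≤ b generalizing a b
  · exact this b hb a ha (by rw [add_comm, hab]) (le_of_not_ge hle)
  rw [repCount, Set.ncard_eq_one]
  refine ⟨(a, b), Set.eq_singleton_iff_unique_mem.2 ⟨⟨ha, hb, hle, hab⟩, ?_⟩⟩
  rintro ⟨c, d⟩ ⟨hc, hd, hcd, hsum⟩
  rcases hA c hc d hd a ha b hb (hsum.trans hab.symm) with ⟨h1, h2⟩ | ⟨h1, h2⟩
  · exact Prod.ext h1 h2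
  · exact Prod.ext (by omega) (by omega)

theorem IsSidon.card_filter_add_mem_le {S : Finset ℤ} (hS : IsSidon ↑S) (I : Finset ℤ) :
    ((S ×ˢ S).filter fun q => q.1 + q.2 ∈ I).card ≤ 2 * I.card := by
  set P := (S ×ˢ S).filter fun q => q.1 + q.2 ∈ I
  have hfiber : ∀ n ∈ P.image (fun q => q.1 + q.2), (P.filter fun q => q.1 + q.2 = n).card ≤ 2 := by
    intro n hn
    obtain ⟨⟨a, b⟩, hab, rfl⟩ := mem_image.1 hn
    have hsub : (P.filter fun q => q.1 + q.2 = a + b) ⊆ {(a, b), (b, a)} := by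
      rintro ⟨c, d⟩ hcd
      simp only [P, mem_filter, mem_product] at hab hcd
      rcases hS c hcd.1.1.1 d hcd.1.1.2 a hab.1.1 b hab.1.2 hcd.2 with ⟨rfl, rfl⟩ | ⟨rfl, rfl⟩
        <;> simp
    exact (card_le_card hsub).trans (card_insert_le _ _)
  calc P.card ≤ 2 * (P.image fun q => q.1 + q.2).card := card_le_mul_card_image _ 2 hfiber
    _ ≤ 2 * I.card := by
      gcongr
      intro n hn
      obtain ⟨q, hq, rfl⟩ := mem_image.1 hn
      exact (mem_filter.1 hq).2

theorem IsSidon.card_filter_sub_mem_le {S : Finset ℤ} (hS : IsSidon ↑S) (I : Finset ℤ) :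
    (S.offDiag.filter fun q => q.1 - q.2 ∈ I).card ≤ I.card := by
  refine card_le_card_of_injOn (fun q => q.1 - q.2) (fun q hq => (mem_filter.1 hq).2) ?_
  rintro ⟨a, b⟩ hab ⟨c, d⟩ hcd h
  simp only [coe_filter, mem_offDiag, Set.mem_ofPred_eq] at hab hcd h
  rcases hS a hab.1.1 d hcd.1.2.1 c hcd.1.1 b hab.1.2.1 (by omega) with ⟨h1, h2⟩ | ⟨h1, -⟩
  · exact Prod.ext h1 h2.symm
  · exact absurd (by omega) hab.1.2.2

theorem IsSidon.card_filter_exists_add_mem_le {S : Finset ℤ} (hS : IsSidon ↑S) (I : Finset ℤ) :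
    (S.filter fun u => ∃ v ∈ S, u + v ∈ I).card ≤ 2 * I.card := by
  refine (card_le_card ?_).trans ((card_image_le (f := Prod.fst)).trans (hS.card_filter_add_mem_le I))
  intro u hu
  obtain ⟨hu, v, hv, hI⟩ := mem_filter.1 hu
  exact mem_image.2 ⟨(u, v), mem_filter.2 ⟨mem_product.2 ⟨hu, hv⟩, hI⟩, rfl⟩

theorem IsSidon.card_filter_exists_sub_mem_le {S : Finset ℤ} (hS : IsSidon ↑S) (I : Finset ℤ) :
    (S.filter fun u => ∃ v ∈ S, v ≠ u ∧ u - v ∈ I).card ≤ I.card := by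
  refine (card_le_card ?_).trans ((card_image_le (f := Prod.fst)).trans (hS.card_filter_sub_mem_le I))
  intro u hu
  obtain ⟨hu, v, hv, hvu, hI⟩ := mem_filter.1 hu
  exact mem_image.2 ⟨(u, v), mem_filter.2 ⟨mem_offDiag.2 ⟨hu, hv, hvu.symm⟩, hI⟩, rfl⟩

theorem card_filter_abs_mem_Ico_le (s : Finset ℤ) (a : ℤ) (w : ℕ) :
    (s.filter fun u => a ≤ |u| ∧ |u| < a + w).card ≤ 2 * w := by
  calc (s.filter fun u => a ≤ |u| ∧ |u| < a + w).card
      ≤ (Ico a (a + w) ∪ Ioc (-(a + w)) (-a)).card := by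
        refine card_le_card fun u hu => ?_
        have hu := (mem_filter.1 hu).2
        simp only [mem_union, mem_Ico, mem_Ioc]
        rcases abs_cases u with ⟨h, -⟩ | ⟨h, -⟩ <;> rw [h] at hu <;> omega
    _ ≤ 2 * w := (card_union_le _ _).trans (by simp [Int.card_Ico, Int.card_Ioc]; omega)

theorem IsSidon.union {F G : Finset ℤ} (hF : IsSidon ↑F) (hG : IsSidon ↑G)
    (h1 : ∀ f ∈ F, ∀ f' ∈ F, ∀ g ∈ G, ∀ g' ∈ G, f + g = f' + g' → f = f' ∧ g = g')
    (h2 : ∀ f ∈ F, ∀ f' ∈ F, ∀ g ∈ G, ∀ g' ∈ G, f + f' ≠ g + g')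
    (h3 : ∀ f ∈ F, ∀ f' ∈ F, ∀ f'' ∈ F, ∀ g ∈ G, f + f' ≠ f'' + g)
    (h4 : ∀ f ∈ F, ∀ g ∈ G, ∀ g' ∈ G, ∀ g'' ∈ G, f + g ≠ g' + g'') :
    IsSidon ↑(F ∪ G) := by
  intro a ha b hb c hc d hd h
  simp only [coe_union, Set.mem_union, mem_coe] at ha hb hc hd
  rcases ha with ha | ha <;> rcases hb with hb | hb <;>
    rcases hc with hc | hc <;> rcases hd with hd | hd
  · exact hF a ha b hb c hc d hd h
  · exact absurd h (h3 a ha b hb c hc d hd)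
  · exact absurd (by linarith) (h3 a ha b hb d hd c hc)
  · exact absurd h (h2 a ha b hb c hc d hd)
  · exact absurd h.symm (h3 c hc d hd a ha b hb)
  · exact Or.inl (h1 a ha c hc b hb d hd h)
  · exact Or.inr (h1 a ha d hd b hb c hc (by linarith))
  · exact absurd h (h4 a ha b hb c hc d hd)
  · exact absurd (by linarith) (h3 c hc d hd b hb a ha)
  · exact Or.inr (h1 b hb c hc a ha d hd (by linarith)).symm
  · exact Or.inl (h1 b hb d hd a ha c hc (by linarith)).symm
  · exact absurd (by linarith) (h4 b hb a ha c hc d hd)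
  · exact absurd h.symm (h2 c hc d hd a ha b hb)
  · exact absurd h.symm (h4 c hc d hd a ha b hb)
  · exact absurd (by linarith) (h4 d hd c hc a ha b hb)
  · exact hG a ha b hb c hc d hd h

theorem abs_le_two_mul_of_mem_add {F : Finset ℤ} {M : ℤ} (hM : ∀ f ∈ F, |f| ≤ M) {z : ℤ}
    (hz : z ∈ F + F) : |z| ≤ 2 * M := by
  obtain ⟨f, hf, f', hf', rfl⟩ := mem_add.1 hz
  linarith [abs_add_le f f', hM f hf, hM f' hf']

theorem abs_le_two_mul_of_mem_sub {F : Finset ℤ} {M : ℤ} (hM : ∀ f ∈ F, |f| ≤ M) {z : ℤ}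
    (hz : z ∈ F - F) : |z| ≤ 2 * M := by
  obtain ⟨f, hf, f', hf', rfl⟩ := mem_sub.1 hz
  linarith [abs_sub f f', hM f hf, hM f' hf']

theorem Finset.abs_le_sup_natAbs (F : Finset ℤ) : ∀ f ∈ F, |f| ≤ ((F.sup Int.natAbs : ℕ) : ℤ) :=
  fun f hf => by rw [Int.abs_eq_natAbs]; exact_mod_cast le_sup (f := Int.natAbs) hf

/-- The annulus condition makes `s` and `s + s' - s''` large for `s, s', s'' ∈ S`, which rules out
the mixed relations `f + f' = f'' + s` and `f + s = s' + s''`. -/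
theorem IsSidon.union_of_separated {F S : Finset ℤ} (hF : IsSidon ↑F) (hS : IsSidon ↑S)
    {M a b : ℤ} (hM : ∀ f ∈ F, |f| ≤ M) (hSab : ∀ s ∈ S, a ≤ |s| ∧ |s| ≤ b)
    (haM : 3 * M < a) (habM : M < 2 * a - b)
    (hsub : ∀ s ∈ S, ∀ s' ∈ S, s ≠ s' → s - s' ∉ F - F)
    (hadd : ∀ s ∈ S, ∀ s' ∈ S, s + s' ∉ F + F) :
    IsSidon ↑(F ∪ S) := by
  have hF' : ∀ f ∈ F, -M ≤ f ∧ f ≤ M := fun f hf => abs_le.1 (hM f hf)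
  have hS' : ∀ s ∈ S, (a ≤ s ∧ s ≤ b) ∨ (-b ≤ s ∧ s ≤ -a) := by
    intro s hs
    obtain ⟨h1, h2⟩ := hSab s hs
    rcases abs_cases s with ⟨h, -⟩ | ⟨h, -⟩ <;> rw [h] at h1 h2 <;> omega
  refine hF.union hS ?_ ?_ ?_ ?_
  · intro f hf f' hf' s hs s' hs' h
    by_cases hss : s = s'
    · exact ⟨by omega, hss⟩
    · exact absurd (by rw [show s - s' = f' - f by omega]; exact sub_mem_sub hf' hf)
        (hsub s hs s' hs' hss)
  · intro f hf f' hf' s hs s' hs' h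
    exact hadd s hs s' hs' (h ▸ add_mem_add hf hf')
  · intro f hf f' hf' f'' hf'' s hs
    have := hF' f hf; have := hF' f' hf'; have := hF' f'' hf''
    rcases hS' s hs with h | h <;> omega
  · intro f hf s hs s' hs' s'' hs''
    have := hF' f hf
    rcases hS' s hs with h | h <;> rcases hS' s' hs' with h' | h' <;>
      rcases hS' s'' hs'' with h'' | h'' <;> omega

theorem exists_superset_mem_add {F : Finset ℤ} (hF : IsSidon ↑F) (n : ℤ) :
    ∃ F' : Finset ℤ, F ⊆ F' ∧ IsSidon ↑F' ∧ n ∈ F' + F' := by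
  by_cases hn : n ∈ F + F
  · exact ⟨F, subset_rfl, hF, hn⟩
  set M : ℤ := ((F.sup Int.natAbs : ℕ) : ℤ)
  have hM := F.abs_le_sup_natAbs
  have hM0 : 0 ≤ M := Int.natCast_nonneg _
  have hn' := abs_le.1 (le_refl |n|)
  set B := 3 * M + 3 * |n| + 1
  have hB : |B| = B := abs_of_pos (by omega)
  have hnB : |n - B| = B - n := by rw [abs_of_neg (by omega)]; ring
  have hpair : ∀ s ∈ ({B, n - B} : Finset ℤ), s = B ∨ s = n - B := by simp
  refine ⟨F ∪ {B, n - B}, subset_union_left, ?_, ?_⟩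
  · refine hF.union_of_separated (isSidon_pair _ _) hM (a := B - |n|) (b := B + |n|)
      ?_ (by omega) (by omega) ?_ ?_
    · intro s hs
      rcases hpair s hs with rfl | rfl <;> omega
    · intro s hs s' hs' hss h
      have := abs_le.1 (abs_le_two_mul_of_mem_sub hM h)
      rcases hpair s hs with rfl | rfl <;> rcases hpair s' hs' with rfl | rfl <;> omega
    · intro s hs s' hs' h
      have := abs_le.1 (abs_le_two_mul_of_mem_add hM h)
      rcases hpair s hs with rfl | rfl <;> rcases hpair s' hs' with rfl | rfl
      · omega
      · exact hn (by rwa [add_sub_cancel] at h)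
      · exact hn (by rwa [sub_add_cancel] at h)
      · omega
  · simpa using add_mem_add (mem_union_right F (mem_insert_self B {n - B}))
      (mem_union_right F (mem_insert_of_mem (mem_singleton_self (n - B))))

theorem exists_isSidon_union_subset {F U : Finset ℤ} (hF : IsSidon ↑F) (hU : IsSidon ↑U)
    {M m : ℕ} (hM : ∀ f ∈ F, |f| ≤ M) (hUm : ∀ u ∈ U, ((m / 2 : ℕ) : ℤ) ≤ |u| ∧ |u| ≤ m)
    (hmM : 2 * M ≤ m / 2) :
    ∃ S ⊆ U, IsSidon ↑(F ∪ S) ∧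
      U.card ≤ S.card + (4 * (M + 1) + 2 * (F + F).card + (F - F).card) := by
  set a : ℤ := (m / 2 : ℕ) + (M + 1) with ha
  set b : ℤ := m - (M + 1) with hb
  set W := U.filter fun u => |u| < a ∨ b < |u|
  set D := U.filter fun u => ∃ v ∈ U, v ≠ u ∧ u - v ∈ F - F
  set P := U.filter fun u => ∃ v ∈ U, u + v ∈ F + F
  have hW : W.card ≤ 4 * (M + 1) := by
    calc W.card ≤ (U.filter fun u => ((m / 2 : ℕ) : ℤ) ≤ |u| ∧ |u| < (m / 2 : ℕ) + (M + 1 : ℕ)).card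
          + (U.filter fun u => (m : ℤ) - M ≤ |u| ∧ |u| < m - M + (M + 1 : ℕ)).card := by
          refine (card_le_card fun u hu => ?_).trans (card_union_le _ _)
          obtain ⟨hu, hab⟩ := mem_filter.1 hu
          have := hUm u hu
          simp only [mem_union, mem_filter, hu, true_and]
          omega
      _ ≤ 4 * (M + 1) := by
          linarith [card_filter_abs_mem_Ico_le U ((m / 2 : ℕ) : ℤ) (M + 1),
            card_filter_abs_mem_Ico_le U ((m : ℤ) - M) (M + 1)]
  have hS : ∀ s ∈ U \ (W ∪ D ∪ P), s ∈ U ∧ (a ≤ |s| ∧ |s| ≤ b) ∧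
      (∀ v ∈ U, v ≠ s → s - v ∉ F - F) ∧ ∀ v ∈ U, s + v ∉ F + F := by
    intro s hs
    simp only [W, D, P, mem_sdiff, mem_union, mem_filter, not_or, not_and, not_exists] at hs
    exact ⟨hs.1, by have := hs.2.1.1 hs.1; omega, fun v hv hvs => hs.2.1.2 hs.1 v hv hvs,
      fun v hv => hs.2.2 hs.1 v hv⟩
  refine ⟨U \ (W ∪ D ∪ P), sdiff_subset, ?_, ?_⟩
  · refine hF.union_of_separated (hU.mono (coe_subset.2 sdiff_subset)) (M := M) (a := a) (b := b)
      hM (fun s hs => (hS s hs).2.1) (by omega) (by omega)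
      (fun s hs s' hs' hss => (hS s hs).2.2.1 s' (hS s' hs').1 (Ne.symm hss))
      (fun s hs s' hs' => (hS s hs).2.2.2 s' (hS s' hs').1)
  · have hD : D.card ≤ (F - F).card := hU.card_filter_exists_sub_mem_le _
    have hP : P.card ≤ 2 * (F + F).card := hU.card_filter_exists_add_mem_le _
    have hWDP : (W ∪ D ∪ P).card ≤ W.card + D.card + P.card :=
      (card_union_le _ _).trans (Nat.add_le_add_right (card_union_le _ _) _)
    have := card_le_card_sdiff_add_card (s := U) (t := W ∪ D ∪ P)
    omega

/-- The counting function `A(-x, x)`. -/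
noncomputable def countIcc (A : Set ℤ) (x : ℕ) : ℕ := (A ∩ Set.Icc (-(x : ℤ)) x).ncard

theorem countIcc_mono {A B : Set ℤ} (h : A ⊆ B) (x : ℕ) : countIcc A x ≤ countIcc B x :=
  Set.ncard_le_ncard (Set.inter_subset_inter_left _ h)
    ((Set.finite_Icc _ _).subset Set.inter_subset_right)

theorem card_le_countIcc {S : Finset ℤ} {A : Set ℤ} (hSA : ↑S ⊆ A) {x : ℕ}
    (hx : ∀ s ∈ S, |s| ≤ x) : S.card ≤ countIcc A x := by
  rw [← Set.ncard_coe_finset]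
  exact Set.ncard_le_ncard (fun s hs => ⟨hSA hs, abs_le.1 (hx s hs)⟩)
    ((Set.finite_Icc _ _).subset Set.inter_subset_right)

theorem IsSidon.countIcc_le {A : Set ℤ} (hA : IsSidon A) {x : ℕ} (hx : 1 ≤ x) :
    (countIcc A x : ℝ) ≤ 4 * √x := by
  obtain ⟨S, hS⟩ := ((Set.finite_Icc (-(x : ℤ)) x).subset
    (Set.inter_subset_right (s := A))).exists_finset_coe
  have hSx : ∀ s ∈ S, -(x : ℤ) ≤ s ∧ s ≤ x := fun s hs =>
    (Set.inter_subset_right (s := A) (hS ▸ mem_coe.2 hs : s ∈ A ∩ _))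
  have hsq : S.card * S.card ≤ 2 * (4 * x + 1) := by
    calc S.card * S.card
        = ((S ×ˢ S).filter fun q => q.1 + q.2 ∈ Icc (-(2 * x : ℤ)) (2 * x)).card := by
          rw [filter_true_of_mem, card_product]
          rintro ⟨a, b⟩ hab
          obtain ⟨ha, hb⟩ := mem_product.1 hab
          have := hSx a ha; have := hSx b hb
          simp only [mem_Icc]
          omega
      _ ≤ 2 * (Icc (-(2 * x : ℤ)) (2 * x)).card :=
          (hA.mono (hS ▸ Set.inter_subset_left)).card_filter_add_mem_le _
      _ = 2 * (4 * x + 1) := by simp only [Int.card_Icc]; omega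
  have hcount : countIcc A x = S.card := by rw [countIcc, ← hS, Set.ncard_coe_finset]
  have hsq' : (S.card : ℝ) ^ 2 ≤ 16 * x := by
    have : (S.card * S.card : ℝ) ≤ 2 * (4 * x + 1) := by exact_mod_cast hsq
    have : (1 : ℝ) ≤ x := by exact_mod_cast hx
    nlinarith
  rw [hcount]
  nlinarith [Real.sq_sqrt (Nat.cast_nonneg (α := ℝ) x), Real.sqrt_nonneg x]

theorem exists_isSidon_extension {F : Finset ℤ} (hF : IsSidon ↑F) (n : ℤ) (k : ℕ) {δ : ℝ} (hδ : 0 < δ) :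
    ∃ F' : Finset ℤ, F ⊆ F' ∧ IsSidon ↑F' ∧ n ∈ F' + F' ∧
      ∃ x : ℕ, k < x ∧ (1 - δ) * √x ≤ countIcc ↑F' x := by
  set M := F.sup Int.natAbs
  set C := 4 * (M + 1) + 2 * (F + F).card + (F - F).card
  obtain ⟨p, hpN, hp⟩ := Nat.exists_infinite_primes (⌈C / δ⌉₊ + C + 4 * M + k + 3)
  have : Fact p.Prime := ⟨hp⟩
  have hpm : 2 * p ≤ p ^ 2 - 1 := by
    have : 3 * p ≤ p * p := Nat.mul_le_mul_right p (by omega)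
    rw [sq]; omega
  have : NeZero (p ^ 2 - 1) := ⟨by omega⟩
  obtain ⟨T, hTcard, hT⟩ := exists_isSidonSet_zmod_sq_sub_one p
  obtain ⟨U, hU, hUcard, hUm⟩ := exists_isSidon_annulus hT
  obtain ⟨S, hSU, hFS, hcard⟩ :=
    exists_isSidon_union_subset hF hU F.abs_le_sup_natAbs hUm (by omega)
  obtain ⟨F', hsub, hF', hn⟩ := exists_superset_mem_add hFS n
  refine ⟨F', subset_union_left.trans hsub, hF', hn, p ^ 2 - 1, by omega, ?_⟩
  have hsqrt : √((p ^ 2 - 1 : ℕ) : ℝ) ≤ p :=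
    Real.sqrt_le_iff.2 ⟨by positivity, by exact_mod_cast Nat.sub_le _ _⟩
  have hCδ : (C : ℝ) ≤ δ * p := by
    have h1 := Nat.le_ceil ((C : ℝ) / δ)
    have h2 : (⌈(C : ℝ) / δ⌉₊ : ℝ) ≤ p := by exact_mod_cast (by omega : ⌈(C : ℝ) / δ⌉₊ ≤ p)
    rw [div_le_iff₀ hδ] at h1
    nlinarith
  have hCp : (C : ℝ) ≤ p := by exact_mod_cast (by omega : C ≤ p)
  have hS : (p : ℝ) - C ≤ S.card := by
    have : p ≤ S.card + C := hTcard ▸ hUcard ▸ hcard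
    linarith [(by exact_mod_cast this : (p : ℝ) ≤ S.card + C)]
  calc (1 - δ) * √((p ^ 2 - 1 : ℕ) : ℝ) ≤ p - C := by
        rcases le_or_gt δ 1 with h | h <;> nlinarith [Real.sqrt_nonneg ((p ^ 2 - 1 : ℕ) : ℝ)]
    _ ≤ S.card := hS
    _ ≤ countIcc ↑F' (p ^ 2 - 1) := by
        exact_mod_cast card_le_countIcc (coe_subset.2 (subset_union_right.trans hsub))
          fun s hs => by exact_mod_cast (hUm s (hSU hs)).2

theorem exists_seq_of_forall_exists {α : Type*} {P : α → Prop} {R : ℕ → α → α → Prop} {a : α}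
    (ha : P a) (h : ∀ k a, P a → ∃ b, P b ∧ R k a b) :
    ∃ f : ℕ → α, ∀ k, P (f k) ∧ R k (f k) (f (k + 1)) := by
  choose g hgP hgR using h
  let f : ℕ → {a // P a} := fun k => Nat.rec ⟨a, ha⟩ (fun k b => ⟨g k b.1 b.2, hgP k b.1 b.2⟩) k
  exact ⟨fun k => (f k).1, fun k => ⟨(f k).2, hgR k _ _⟩⟩

theorem exists_isSidon_frequently {δ : ℝ} (hδ : 0 < δ) :
    ∃ A : Set ℤ, IsSidon A ∧ (∀ n, n ∈ A + A) ∧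
      ∃ᶠ x : ℕ in Filter.atTop, (1 - δ) * √x ≤ countIcc A x := by
  obtain ⟨e, he⟩ := exists_surjective_nat ℤ
  obtain ⟨F, hF⟩ := exists_seq_of_forall_exists (P := fun F : Finset ℤ => IsSidon ↑F)
    (R := fun k F F' => F ⊆ F' ∧ e k ∈ F' + F' ∧
      ∃ x : ℕ, k < x ∧ (1 - δ) * √x ≤ countIcc ↑F' x)
    (a := ∅) (by simp [IsSidon]) fun k F hF => by
      obtain ⟨F', hsub, hF', hrep, hdense⟩ := exists_isSidon_extension hF (e k) k hδ
      exact ⟨F', hF', hsub, hrep, hdense⟩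
  have hmono : Monotone fun k => (F k : Set ℤ) :=
    monotone_nat_of_le_succ fun k => coe_subset.2 (hF k).2.1
  have hle : ∀ k, (F k : Set ℤ) ⊆ ⋃ k, ↑(F k) := Set.subset_iUnion (fun k => (F k : Set ℤ))
  refine ⟨⋃ k, ↑(F k), isSidon_iUnion hmono fun k => (hF k).1, fun n => ?_, ?_⟩
  · obtain ⟨k, rfl⟩ := he n
    exact Set.add_subset_add (hle (k + 1)) (hle (k + 1)) (by exact_mod_cast (hF k).2.2.1)
  · refine Filter.frequently_atTop.2 fun k => ?_
    obtain ⟨x, hkx, hx⟩ := (hF k).2.2.2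
    exact ⟨x, hkx.le, hx.trans (by exact_mod_cast countIcc_mono (hle (k + 1)) x)⟩

theorem stmt_10 :
    (∀ ε : ℝ, 0 < ε → ∃ A : Set ℤ, UniqueRepBasis A ∧
      {x : ℕ | 0 < x ∧
        (1 - ε) * Real.sqrt x ≤ ((A ∩ Set.Icc (-(x : ℤ)) (x : ℤ)).ncard : ℝ)}.Infinite) ∧
    ∀ c : ℝ, c < 1 → ∃ A : Set ℤ, UniqueRepBasis A ∧
      c ≤ Filter.limsup
        (fun x : ℕ => ((A ∩ Set.Icc (-(x : ℤ)) (x : ℤ)).ncard : ℝ) / Real.sqrt x)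
        Filter.atTop := by
  constructor
  · intro ε hε
    obtain ⟨A, hA, hrep, hfreq⟩ := exists_isSidon_frequently hε
    refine ⟨A, hA.uniqueRepBasis hrep, Nat.frequently_atTop_iff_infinite.1 ?_⟩
    exact ((Filter.eventually_gt_atTop 0).and_frequently hfreq).mono fun x hx => hx
  · intro c hc
    obtain ⟨A, hA, hrep, hfreq⟩ := exists_isSidon_frequently (sub_pos.2 hc)
    refine ⟨A, hA.uniqueRepBasis hrep, Filter.le_limsup_of_frequently_le ?_ ?_⟩
    · refine ((Filter.eventually_gt_atTop 0).and_frequently hfreq).mono fun x ⟨hx0, hx⟩ => ?_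
      rw [le_div_iff₀ (Real.sqrt_pos.2 (by exact_mod_cast hx0)), ← sub_sub_cancel 1 c]
      exact hx
    · refine ⟨4, Filter.eventually_map.2 ((Filter.eventually_ge_atTop 1).mono fun x hx => ?_)⟩
      show _ / _ ≤ (4 : ℝ)
      rw [div_le_iff₀ (Real.sqrt_pos.2 (Nat.cast_pos.2 hx))]
      exact hA.countIcc_le hx
end

section
/- For every unique representation basis A of ℤ and every ε > 0, A(−x, x) ≤ (√2 + ε)√x for all sufficiently large x; hence c_𝒜 ≤ √2. -/
open Finset Filter

theorem UniqueRepBasis.isSidon {A : Set ℤ} (hA : UniqueRepBasis A) : IsSidon A := by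
  intro a ha b hb c hc d hd habcd
  obtain ⟨z, hz⟩ := Set.ncard_eq_one.mp (hA (a + b))
  have sorted_eq : ∀ p ∈ A, ∀ q ∈ A, p + q = a + b → (min p q, max p q) = z := by
    intro p hp q hq hpq
    have hmem : (min p q, max p q) ∈
        {r : ℤ × ℤ | r.1 ∈ A ∧ r.2 ∈ A ∧ r.1 ≤ r.2 ∧ r.1 + r.2 = a + b} :=
      ⟨min_rec' (· ∈ A) hp hq, max_rec' (· ∈ A) hp hq, min_le_max, by omega⟩
    rwa [hz] at hmem
  have h := (sorted_eq a ha b hb rfl).trans (sorted_eq c hc d hd habcd.symm).symm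
  simp only [Prod.mk.injEq] at h
  omega

theorem Real.le_add_sqrt_of_sq_le {k C D : ℝ} (hC : 0 ≤ C) (hD : 0 ≤ D)
    (h : k ^ 2 ≤ C * k + D) : k ≤ C + √D := by
  by_contra! hk
  nlinarith [Real.sq_sqrt hD, Real.sqrt_nonneg D]

theorem Finset.sum_card_inter_Ico {S : Finset ℤ} {a : ℤ} {n : ℕ} (hS : S ⊆ Ico a (a + n))
    (u : ℕ) : ∑ t ∈ Ico (a - u) (a + n), #(S ∩ Ico t (t + u)) = #S * u := by
  simp_rw [← filter_mem_eq_inter, card_filter]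
  rw [sum_comm]
  refine sum_const_nat fun s hs => ?_
  have hs' := mem_Ico.mp (hS hs)
  rw [← card_filter, show {t ∈ Ico (a - u) (a + n) | s ∈ Ico t (t + (u : ℤ))} = Ioc (s - u) s by
    ext t; simp only [mem_filter, mem_Ico, mem_Ioc]; omega]
  simp

namespace IsSidon

theorem mono_s11 {A B : Set ℤ} (hB : IsSidon B) (h : A ⊆ B) : IsSidon A :=
  fun a ha b hb c hc d hd => hB a (h ha) b (h hb) c (h hc) d (h hd)

variable {S : Finset ℤ}

theorem sum_card_offDiag_inter_Ico_le (hS : IsSidon (S : Set ℤ)) (T : Finset ℤ) (u : ℕ) :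
    ∑ t ∈ T, #(S ∩ Ico t (t + u)).offDiag ≤ u * u := by
  rw [← card_sigma]
  calc #(T.sigma fun t => (S ∩ Ico t (t + u)).offDiag)
      ≤ #(Ico 0 (u : ℤ) ×ˢ Ico 0 (u : ℤ)) := by
        refine card_le_card_of_injOn (fun x => (x.2.1 - x.1, x.2.2 - x.1)) ?_ ?_
        · rintro ⟨t, p, q⟩ h
          simp only [coe_sigma, Set.mem_sigma_iff, mem_coe, mem_offDiag, mem_inter,
            mem_Ico] at h
          simp only [coe_product, Set.mem_prod, mem_coe, mem_Ico]
          omega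
        · rintro ⟨t, p, q⟩ h ⟨t', p', q'⟩ h' heq
          simp only [coe_sigma, Set.mem_sigma_iff, mem_coe, mem_offDiag, mem_inter] at h h'
          simp only [Prod.mk.injEq] at heq
          rcases hS p h.2.1.1 q' h'.2.2.1.1 p' h'.2.1.1 q h.2.2.1.1 (by omega) with
            ⟨rfl, rfl⟩ | ⟨rfl, -⟩
          · obtain rfl : t = t' := by omega
            rfl
          · exact absurd rfl h.2.2.2
    _ = u * u := by simp

theorem card_sq_mul_le (hS : IsSidon (S : Set ℤ)) {a : ℤ} {n : ℕ} (hSa : S ⊆ Ico a (a + n))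
    (u : ℕ) : #S ^ 2 * u ≤ (n + u) * (#S + u) := by
  set T := Ico (a - u) (a + n)
  set w := fun t => #(S ∩ Ico t (t + u))
  have hT : #T = n + u := by simp only [T, Int.card_Ico]; omega
  have hsq : ∑ t ∈ T, w t ^ 2 ≤ #S * u + u * u := by
    have hsplit : ∀ t, w t ^ 2 = w t + #(S ∩ Ico t (t + u)).offDiag := fun t => by
      simp only [w, offDiag_card, sq]
      have := Nat.le_mul_self #(S ∩ Ico t (t + u))
      omega
    rw [sum_congr rfl fun t _ => hsplit t, sum_add_distrib, sum_card_inter_Ico hSa]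
    exact Nat.add_le_add_left (hS.sum_card_offDiag_inter_Ico_le T u) _
  have hCS : (#S * u) ^ 2 ≤ (n + u) * (#S * u + u * u) :=
    calc (#S * u) ^ 2 = (∑ t ∈ T, w t) ^ 2 := by rw [sum_card_inter_Ico hSa]
      _ ≤ #T * ∑ t ∈ T, w t ^ 2 := sq_sum_le_card_mul_sum_sq
      _ ≤ (n + u) * (#S * u + u * u) := hT ▸ Nat.mul_le_mul_left _ hsq
  rcases u.eq_zero_or_pos with rfl | hu
  · simp
  · refine Nat.le_of_mul_le_mul_right ?_ hu
    calc #S ^ 2 * u * u = (#S * u) ^ 2 := by ring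
      _ ≤ (n + u) * (#S * u + u * u) := hCS
      _ = (n + u) * (#S + u) * u := by ring

theorem card_le_of_subset_Icc (hS : IsSidon (S : Set ℤ)) {x : ℕ} (hSx : S ⊆ Icc (-(x : ℤ)) x)
    {δ : ℝ} (hδ : 0 < δ) (hx : 2 ≤ δ * x) : (#S : ℝ) ≤ 3 / δ + 1 + √((2 + 2 * δ) * x) := by
  set u := ⌈δ * x⌉₊
  have hu : δ * x ≤ u := Nat.le_ceil _
  have hu' : (u : ℝ) < δ * x + 1 := Nat.ceil_lt_add_one (by positivity)
  have hsub : S ⊆ Ico (-(x : ℤ)) (-(x : ℤ) + (2 * x + 1 : ℕ)) := fun s hs => by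
    have := mem_Icc.mp (hSx hs)
    simp only [mem_Ico]
    omega
  have key : (#S : ℝ) ^ 2 * u ≤ (2 * x + 1 + u) * (#S + u) := by
    exact_mod_cast hS.card_sq_mul_le hsub u
  have hx1 : (1 : ℝ) ≤ x := by
    rcases x.eq_zero_or_pos with rfl | hx0
    · norm_num at hx
    · exact_mod_cast hx0
  have hupos : (0 : ℝ) < u := by nlinarith
  have hlen : (2 * x + 1 : ℝ) ≤ 3 / δ * u :=
    calc (2 * x + 1 : ℝ) ≤ 3 / δ * (δ * x) := by field_simp; linarith
      _ ≤ 3 / δ * u := by gcongr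
  have hlen' : (2 * x + 1 + u : ℝ) ≤ (2 + 2 * δ) * x := by linarith
  refine Real.le_add_sqrt_of_sq_le (by positivity) (by positivity) (le_of_mul_le_mul_right ?_ hupos)
  calc (#S : ℝ) ^ 2 * u ≤ (2 * x + 1 + u) * (#S + u) := key
    _ = (2 * x + 1) * #S + u * #S + (2 * x + 1 + u) * u := by ring
    _ ≤ 3 / δ * u * #S + u * #S + (2 + 2 * δ) * x * u := by gcongr
    _ = ((3 / δ + 1) * #S + (2 + 2 * δ) * x) * u := by ring

theorem eventually_ncard_inter_Icc_le {A : Set ℤ} (hA : IsSidon A) {ε : ℝ} (hε : 0 < ε) :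
    ∀ᶠ x : ℕ in atTop, ((A ∩ Set.Icc (-(x : ℤ)) x).ncard : ℝ) ≤ (√2 + ε) * √x := by
  set δ := ε / 2
  have hδ : 0 < δ := half_pos hε
  have hsqrt : √(2 + 2 * δ) ≤ √2 + δ := Real.sqrt_le_iff.mpr
    ⟨by positivity, by nlinarith [Real.sq_sqrt zero_le_two, Real.one_lt_sqrt_two]⟩
  filter_upwards [(tendsto_natCast_atTop_atTop.const_mul_atTop hδ).eventually_ge_atTop 2,
    (Real.tendsto_sqrt_atTop.comp tendsto_natCast_atTop_atTop).eventually_ge_atTop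
      ((3 / δ + 1) / δ)] with x hx hsx
  obtain ⟨S, hS⟩ := ((Set.finite_Icc (-(x : ℤ)) x).inter_of_right A).exists_finset_coe
  have hSx : S ⊆ Icc (-(x : ℤ)) x := fun s hs => by
    simpa using (Set.ext_iff.mp hS s).mp hs |>.2
  have hcard := (hA.mono_s11 (hS ▸ Set.inter_subset_left)).card_le_of_subset_Icc hSx hδ hx
  rw [← hS, Set.ncard_coe_finset]
  calc (#S : ℝ) ≤ 3 / δ + 1 + √(2 + 2 * δ) * √x := by
        rwa [← Real.sqrt_mul (by positivity)]
    _ ≤ δ * √x + (√2 + δ) * √x := by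
        gcongr
        exact (div_le_iff₀' hδ).mp hsx
    _ = (√2 + ε) * √x := by ring

end IsSidon

theorem stmt_11 (A : Set ℤ) (hA : UniqueRepBasis A) :
    (∀ ε : ℝ, 0 < ε → ∃ X : ℕ, ∀ x : ℕ, X ≤ x →
      ((A ∩ Set.Icc (-(x : ℤ)) (x : ℤ)).ncard : ℝ) ≤ (Real.sqrt 2 + ε) * Real.sqrt x) ∧
    Filter.limsup
      (fun x : ℕ => ((A ∩ Set.Icc (-(x : ℤ)) (x : ℤ)).ncard : ℝ) / Real.sqrt x)
      Filter.atTop ≤ Real.sqrt 2 := by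
  have hbound := fun ε (hε : 0 < ε) => hA.isSidon.eventually_ncard_inter_Icc_le hε
  refine ⟨fun ε hε => eventually_atTop.mp (hbound ε hε), le_of_forall_pos_le_add fun ε hε => ?_⟩
  refine limsup_le_of_le (isCoboundedUnder_le_of_le _ fun x => by positivity) ?_
  filter_upwards [hbound ε hε] with x hx
  exact div_le_of_le_mul₀ (Real.sqrt_nonneg _) (by positivity) hx
end

section
/- Any Sidon set contained in an interval of integers of length L has at most (1 + o(1))√L elements as L → ∞; in particular, for every δ > 0 there is L₀ such that for L ≥ L₀, any Sidon set in an interval of length L has at most (1 + δ)√L elements. -/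
/-!
Erdős–Turán counting. Slide a window of length `u` across the interval: the `L + u` window
positions contain `#T * u` points in total, while, because all differences of a Sidon set are
distinct, they contain at most `u² - u` ordered pairs of distinct points in total. Cauchy–Schwarz
over the windows gives `#T² u ≤ (L + u)(u + #T)`, and `u ≈ δ L` yields
`#T ≤ (1 + δ) √L` once `L` is large.
-/

open Finset Filter

lemma IsSidon.injOn_sub_offDiag {S : Set ℤ} (hS : IsSidon S) :
    Set.InjOn (fun p : ℤ × ℤ => p.2 - p.1) S.offDiag := by
  rintro ⟨x, y⟩ ⟨hx, hy, hxy⟩ ⟨x', y'⟩ ⟨hx', hy', -⟩ h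
  rcases hS x hx y' hy' x' hx' y hy (by simp only at h; linarith) with ⟨rfl, rfl⟩ | ⟨rfl, -⟩
  · rfl
  · exact absurd rfl hxy

section Windows

variable {T : Finset ℤ}

lemma sum_card_inter_Ico_eq {a : ℤ} {L : ℕ} (hT : T ⊆ Icc a (a + L)) (u : ℕ) :
    ∑ t ∈ Icc (a - u + 1) (a + L), #(T ∩ Ico t (t + u)) = #T * u := by
  have hcount := sum_card_bipartiteAbove_eq_sum_card_bipartiteBelow
    (s := Icc (a - u + 1) (a + L)) (t := T) (r := fun t x => x ∈ Ico t (t + (u : ℤ)))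
  simp only [bipartiteAbove, bipartiteBelow, filter_mem_eq_inter] at hcount
  rw [hcount, ← smul_eq_mul, ← sum_const]
  refine sum_congr rfl fun x hx => ?_
  have hx := mem_Icc.1 (hT hx)
  have hstarts :
      {t ∈ Icc (a - u + 1) (a + L) | x ∈ Ico t (t + (u : ℤ))} = Icc (x - u + 1) x := by
    ext t
    simp only [mem_filter, mem_Icc, mem_Ico]
    omega
  rw [hstarts, Int.card_Icc]
  omega

lemma sum_card_offDiag_inter_Ico_le (hT : Set.InjOn (fun p : ℤ × ℤ => p.2 - p.1) T.offDiag)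
    (I : Finset ℤ) (u : ℕ) : ∑ t ∈ I, #(T ∩ Ico t (t + u)).offDiag ≤ u * u - u := by
  -- `(x - t, y - t)` determines `y - x`, hence `(x, y)`, hence `t`.
  have hbox : #(Ico (0 : ℤ) u).offDiag = u * u - u := by simp
  rw [← card_sigma, ← hbox]
  refine card_le_card_of_injOn (fun q => (q.2.1 - q.1, q.2.2 - q.1)) ?_ ?_
  · rintro ⟨t, x, y⟩ h
    simp only [coe_sigma, Set.mem_sigma_iff, mem_coe, mem_offDiag, mem_inter, mem_Ico] at h ⊢
    omega
  · rintro ⟨t, x, y⟩ h ⟨t', x', y'⟩ h' heq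
    simp only [coe_sigma, Set.mem_sigma_iff, mem_coe, mem_offDiag, mem_inter, mem_Ico,
      Prod.mk.injEq] at h h' heq
    obtain ⟨_, ⟨hx, -⟩, ⟨hy, -⟩, hxy⟩ := h
    obtain ⟨_, ⟨hx', -⟩, ⟨hy', -⟩, hxy'⟩ := h'
    obtain ⟨rfl, rfl⟩ : x = x' ∧ y = y' := Prod.mk.inj <|
      hT (by simp [hx, hy, hxy]) (by simp [hx', hy', hxy']) (by simp only; omega)
    obtain rfl : t = t' := by omega
    rfl

lemma card_sq_mul_le_of_injOn_sub {a : ℤ} {L : ℕ} (hT : T ⊆ Icc a (a + L))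
    (hdiff : Set.InjOn (fun p : ℤ × ℤ => p.2 - p.1) T.offDiag) (u : ℕ) :
    #T ^ 2 * u ≤ (L + u) * (u + #T) := by
  set I := Icc (a - u + 1) (a + L)
  set N := fun t => #(T ∩ Ico t (t + u))
  have hI : #I = L + u := by rw [Int.card_Icc]; omega
  have hsq : ∑ t ∈ I, N t ^ 2 ≤ u * (u + #T) :=
    calc ∑ t ∈ I, N t ^ 2 = ∑ t ∈ I, #(T ∩ Ico t (t + u)).offDiag + ∑ t ∈ I, N t := by
          rw [← sum_add_distrib]
          refine sum_congr rfl fun t _ => ?_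
          rw [offDiag_card, sq, Nat.sub_add_cancel (Nat.le_mul_self _)]
      _ ≤ (u * u - u) + #T * u :=
          add_le_add (sum_card_offDiag_inter_Ico_le hdiff I u) (sum_card_inter_Ico_eq hT u).le
      _ ≤ u * (u + #T) := by rw [mul_add, mul_comm u #T]; omega
  have hcs := sq_sum_le_card_mul_sum_sq (s := I) (f := N)
  rw [sum_card_inter_Ico_eq hT u, hI] at hcs
  rcases u.eq_zero_or_pos with rfl | hu
  · simp
  refine Nat.le_of_mul_le_mul_right ?_ hu
  calc #T ^ 2 * u * u = (#T * u) ^ 2 := by ring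
    _ ≤ (L + u) * ∑ t ∈ I, N t ^ 2 := hcs
    _ ≤ (L + u) * (u * (u + #T)) := by gcongr
    _ = (L + u) * (u + #T) * u := by ring

end Windows

lemma le_one_add_mul_sqrt_of_sq_mul_le {δ L k : ℝ} (hδ : 0 < δ) (hL : 1 ≤ L)
    (hlarge : 2 + 1 / δ < δ * √L) (hk : 0 ≤ k)
    (hwindow : ∀ u : ℕ, k ^ 2 * u ≤ (L + u) * (u + k)) : k ≤ (1 + δ) * √L := by
  set s := √L
  have hs : s ^ 2 = L := Real.sq_sqrt (by linarith)
  have hs1 : 1 ≤ s := Real.one_le_sqrt.2 hL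
  obtain ⟨u, hu_ge, hu_le⟩ : ∃ u : ℕ, δ * L ≤ u ∧ (u : ℝ) ≤ δ * L + 1 :=
    ⟨⌈δ * L⌉₊, Nat.le_ceil _, (Nat.ceil_lt_add_one (by positivity)).le⟩
  have hu : 0 < (u : ℝ) := by nlinarith
  have hLu : L ≤ u / δ := by rw [le_div_iff₀ hδ]; linarith
  have hquad : k ^ 2 * u ≤ ((1 + δ) * L + 1 + (1 + 1 / δ) * k) * u :=
    calc k ^ 2 * u ≤ (L + u) * u + (L + u) * k := by linarith [hwindow u]
      _ ≤ ((1 + δ) * L + 1) * u + (u + u / δ) * k :=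
          add_le_add (mul_le_mul_of_nonneg_right (by linarith) hu.le)
            (mul_le_mul_of_nonneg_right (by linarith) hk)
      _ = ((1 + δ) * L + 1 + (1 + 1 / δ) * k) * u := by ring
  replace hquad := le_of_mul_le_mul_right hquad hu
  -- For `k > (1 + δ) s`, `k² - (1 + 1/δ) k` exceeds its value at `(1 + δ) s`, already too big.
  by_contra! hbig
  have hδs : 1 + (1 + 1 / δ) < δ * s := by linarith
  nlinarith [mul_lt_mul_of_pos_right hδs (by positivity : 0 < (1 + δ) * s),
    mul_pos (sub_pos.2 hbig) (by nlinarith : 0 < k + (1 + δ) * s - (1 + 1 / δ))]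

theorem stmt_15 (δ : ℝ) (hδ : 0 < δ) :
    ∃ L₀ : ℕ, ∀ L : ℕ, L₀ ≤ L → ∀ a : ℤ, ∀ S : Set ℤ,
      IsSidon S → S ⊆ Set.Icc a (a + (L : ℤ)) →
      (S.ncard : ℝ) ≤ (1 + δ) * Real.sqrt L := by
  have hsqrt : Tendsto (fun L : ℕ => δ * √L) atTop atTop :=
    (Real.tendsto_sqrt_atTop.comp tendsto_natCast_atTop_atTop).const_mul_atTop hδ
  obtain ⟨L₀, hL₀⟩ := eventually_atTop.1 <|
    (eventually_ge_atTop 1).and (hsqrt.eventually_gt_atTop (2 + 1 / δ))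
  refine ⟨L₀, fun L hL a S hS hSa => ?_⟩
  obtain ⟨hL1, hlarge⟩ := hL₀ L hL
  obtain ⟨T, rfl⟩ : ∃ T : Finset ℤ, ↑T = S :=
    ⟨_, ((Set.finite_Icc a (a + L)).subset hSa).coe_toFinset⟩
  rw [Set.ncard_coe_finset]
  rw [← coe_Icc, coe_subset] at hSa
  refine le_one_add_mul_sqrt_of_sq_mul_le hδ (by exact_mod_cast hL1) hlarge (by positivity)
    fun u => ?_
  exact_mod_cast card_sq_mul_le_of_injOn_sub hSa (coe_offDiag T ▸ hS.injOn_sub_offDiag) u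
end

section
/- Let p be prime and let g_1, ..., g_p ∈ {1, ..., p²−1} have all pairwise sums distinct mod p²−1, ordered increasingly. Fix ε ∈ (0,1) and let ℓ be the number of g_i ≤ (1/2 − ε²/8)p² and y the number of g_i < (1/2 + ε²/8)p². Then for p sufficiently large (depending on ε), y − ℓ ≤ (5ε/8)p. -/
/-!
Sort the `g i` lying in the middle interval, of length `L = ε²p²/4`, as `s₀ < ⋯ < s_{m-1}`.
They form a Sidon set in `ℤ`, so the `N = K(m-K)` gaps `s_{i+k} - s_i` (`1 ≤ k ≤ K`, `i < m-K`)
are distinct positive integers and their sum is at least `N(N+1)/2`. For fixed `k` the gaps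
telescope to at most `kL`, so the sum is at most `K(K+1)L/2`. Hence `N² ≤ K(K+1)L`, and `K = 4`
gives `m ≤ 4 + (√5/4)εp ≤ (5/8)εp` as soon as `εp ≥ 64`.
-/

open Finset

theorem IsSidon.mono_s16 {S T : Set ℤ} (hT : IsSidon T) (hST : S ⊆ T) : IsSidon S :=
  fun a ha b hb c hc d hd => hT a (hST ha) b (hST hb) c (hST hc) d (hST hd)

theorem IsSidon.eq_of_sub_eq {S : Set ℤ} (hS : IsSidon S) {x y x' y' : ℤ} (hx : x ∈ S)
    (hy : y ∈ S) (hx' : x' ∈ S) (hy' : y' ∈ S) (hxy : x ≠ y) (h : y - x = y' - x') :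
    x = x' ∧ y = y' := by
  rcases hS y hy x' hx' y' hy' x hx (by linarith) with ⟨hyy', hx'x⟩ | ⟨hyx, -⟩
  · exact ⟨hx'x.symm, hyy'⟩
  · exact absurd hyx.symm hxy

theorem isSidon_range_of_modEq {ι : Type*} [LinearOrder ι] {n : ℤ} {g : ι → ℤ}
    (h : ∀ i j k l, i ≤ j → k ≤ l → g i + g j ≡ g k + g l [ZMOD n] → i = k ∧ j = l) :
    IsSidon (Set.range g) := by
  rintro _ ⟨i, rfl⟩ _ ⟨j, rfl⟩ _ ⟨k, rfl⟩ _ ⟨l, rfl⟩ hsum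
  rcases le_total i j with hij | hji <;> rcases le_total k l with hkl | hlk
  · obtain ⟨rfl, rfl⟩ := h i j k l hij hkl (by rw [hsum]); simp
  · obtain ⟨rfl, rfl⟩ := h i j l k hij hlk (by rw [hsum, add_comm]); simp
  · obtain ⟨rfl, rfl⟩ := h j i k l hji hkl (by rw [add_comm, hsum]); simp
  · obtain ⟨rfl, rfl⟩ := h j i l k hji hlk (by rw [add_comm, hsum, add_comm]); simp

theorem Finset.sum_range_sub_shift {G : Type*} [AddCommGroup G] (f : ℕ → G) (n k : ℕ) :
    ∑ i ∈ range n, (f (i + k) - f i) = ∑ j ∈ range k, (f (n + j) - f j) := by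
  have h₁ := sum_range_add f k n
  have h₂ := sum_range_add f n k
  rw [add_comm k n] at h₁
  simp only [sum_sub_distrib, add_comm _ k]
  rw [sub_eq_sub_iff_add_eq_add, add_comm (∑ i ∈ range n, f (k + i)), ← h₁, h₂, add_comm]

theorem Finset.two_mul_sum_range_natCast_add_one {R : Type*} [CommSemiring R] (K : ℕ) :
    2 * ∑ k ∈ range K, ((k : R) + 1) = K * (K + 1) := by
  induction K with
  | zero => simp
  | succ K ih => rw [sum_range_succ, mul_add, ih]; push_cast; ring

theorem two_mul_sum_shift_sub_le {f : ℕ → ℤ} {m K : ℕ} {L : ℝ}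
    (hL : ∀ i < m, ∀ j < m, (f j - f i : ℝ) ≤ L) (hK : K ≤ m) :
    2 * ∑ q ∈ range (m - K) ×ˢ range K, ((f (q.1 + (q.2 + 1)) - f q.1 : ℤ) : ℝ) ≤
      K * (K + 1) * L := by
  have h_inner : ∀ k ∈ range K,
      ∑ i ∈ range (m - K), ((f (i + (k + 1)) - f i : ℤ) : ℝ) ≤ (k + 1) * L := by
    intro k hk
    rw [mem_range] at hk
    push_cast
    rw [sum_range_sub_shift (fun i => (f i : ℝ))]
    calc _ ≤ ∑ _j ∈ range (k + 1), L :=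
          sum_le_sum fun j hj => by rw [mem_range] at hj; exact hL _ (by omega) _ (by omega)
      _ = (k + 1) * L := by simp
  calc _ = 2 * ∑ k ∈ range K, ∑ i ∈ range (m - K), ((f (i + (k + 1)) - f i : ℤ) : ℝ) :=
        by rw [sum_product, sum_comm]
    _ ≤ 2 * ∑ k ∈ range K, ((k : ℝ) + 1) * L := by gcongr with k hk; exact h_inner k hk
    _ = K * (K + 1) * L := by rw [← sum_mul, ← mul_assoc, two_mul_sum_range_natCast_add_one]

theorem IsSidon.injOn_shift_sub {f : ℕ → ℤ} {m K : ℕ} (hf : StrictMonoOn f (Set.Iio m))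
    (hS : IsSidon (f '' Set.Iio m)) :
    Set.InjOn (fun q : ℕ × ℕ => f (q.1 + (q.2 + 1)) - f q.1)
      ↑(range (m - K) ×ˢ range K) := by
  rintro ⟨i, k⟩ hik ⟨j, l⟩ hjl h
  simp only [coe_product, coe_range, Set.mem_prod, Set.mem_Iio] at hik hjl h
  have hmem : ∀ r < m, f r ∈ f '' Set.Iio m := fun r hr => Set.mem_image_of_mem f hr
  obtain ⟨hij, hkl⟩ := hS.eq_of_sub_eq (hmem i (by omega)) (hmem (i + (k + 1)) (by omega))
    (hmem j (by omega)) (hmem (j + (l + 1)) (by omega))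
    (hf (a := i) (by simp; omega) (by simp; omega) (by omega)).ne h
  have hij' : i = j := hf.injOn (by simp; omega) (by simp; omega) hij
  have hkl' : i + (k + 1) = j + (l + 1) := hf.injOn (by simp; omega) (by simp; omega) hkl
  simp only [Prod.mk.injEq]
  omega

theorem sq_le_of_strictMonoOn_of_isSidon {f : ℕ → ℤ} {m K : ℕ} {L : ℝ}
    (hf : StrictMonoOn f (Set.Iio m)) (hS : IsSidon (f '' Set.Iio m))
    (hL : ∀ i < m, ∀ j < m, (f j - f i : ℝ) ≤ L) (hK : K ≤ m) :
    ((K * (m - K) : ℕ) : ℝ) ^ 2 ≤ K * (K + 1) * L := by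
  set D : ℕ × ℕ → ℤ := fun q => f (q.1 + (q.2 + 1)) - f q.1
  set T := (range (m - K) ×ˢ range K).image D
  have hT_card : #T = K * (m - K) := by
    rw [card_image_of_injOn (hS.injOn_shift_sub hf), card_product, card_range, card_range,
      mul_comm]
  have hT_pos : ∀ x ∈ T, 1 ≤ x := by
    simp only [T, mem_image, mem_product, mem_range]
    rintro _ ⟨⟨i, k⟩, ⟨hi, hk⟩, rfl⟩
    have := hf (a := i) (by simp; omega) (by simp; omega) (by omega : i < i + (k + 1))
    simp only [D]
    omega
  have h_gauss : (#T : ℝ) ^ 2 ≤ 2 * ∑ x ∈ T, (x : ℝ) := by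
    have h := sum_range_le_sum hT_pos
    have h2 := two_mul_sum_range_natCast_add_one (R := ℝ) #T
    rw [← Int.cast_le (R := ℝ)] at h
    push_cast at h
    simp only [add_comm (1 : ℝ)] at h
    nlinarith
  have h_sum : ∑ x ∈ T, (x : ℝ) = ∑ q ∈ range (m - K) ×ˢ range K, ((D q : ℤ) : ℝ) :=
    sum_image fun x hx y hy h => hS.injOn_shift_sub hf hx hy h
  rw [← hT_card]
  exact h_gauss.trans (h_sum ▸ two_mul_sum_shift_sub_le hL hK)

theorem IsSidon.sq_mul_card_sub_le {S : Finset ℤ} (hS : IsSidon S) {L : ℝ}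
    (hL : ∀ x ∈ S, ∀ y ∈ S, (y - x : ℝ) ≤ L) {K : ℕ} (hK : K ≤ #S) :
    ((K * (#S - K) : ℕ) : ℝ) ^ 2 ≤ K * (K + 1) * L := by
  set s := S.orderEmbOfFin rfl
  -- `s` extended to all of `ℕ` by a junk value, so that indices can be shifted freely
  let f : ℕ → ℤ := fun r => if h : r < #S then s ⟨r, h⟩ else 0
  have hf_apply : ∀ r (h : r < #S), f r = s ⟨r, h⟩ := fun r h => dif_pos h
  have hf : StrictMonoOn f (Set.Iio #S) := fun r hr t ht hrt => by
    rw [hf_apply r hr, hf_apply t ht]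
    exact s.strictMono hrt
  have hf_mem : f '' Set.Iio #S ⊆ S := by
    rintro _ ⟨r, hr, rfl⟩
    rw [hf_apply r hr]
    exact S.orderEmbOfFin_mem rfl _
  exact sq_le_of_strictMonoOn_of_isSidon hf (hS.mono_s16 hf_mem)
    (fun i hi j hj => hL _ (hf_mem ⟨i, hi, rfl⟩) _ (hf_mem ⟨j, hj, rfl⟩)) hK

theorem stmt_16_general (ε : ℝ) (hε0 : 0 < ε) :
    ∃ P : ℕ, ∀ p : ℕ, p.Prime → P ≤ p →
      ∀ g : Fin p → ℤ, StrictMono g →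
        (∀ i, g i ∈ Set.Icc (1 : ℤ) ((p : ℤ) ^ 2 - 1)) →
        (∀ i j k l : Fin p, i ≤ j → k ≤ l →
          g i + g j ≡ g k + g l [ZMOD ((p : ℤ) ^ 2 - 1)] → i = k ∧ j = l) →
        ((Finset.univ.filter (fun i : Fin p =>
            ((g i : ℝ) < (1 / 2 + ε ^ 2 / 8) * (p : ℝ) ^ 2))).card : ℝ) -
        ((Finset.univ.filter (fun i : Fin p =>
            ((g i : ℝ) ≤ (1 / 2 - ε ^ 2 / 8) * (p : ℝ) ^ 2))).card : ℝ)
        ≤ 5 * ε / 8 * (p : ℝ) := by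
  refine ⟨⌈64 / ε⌉₊, fun p _ hPp g hg _ hsum => ?_⟩
  have hεp : 64 ≤ ε * p := by
    rw [← div_le_iff₀' hε0]
    exact (Nat.le_ceil _).trans (by exact_mod_cast hPp)
  set A := univ.filter fun i : Fin p => (g i : ℝ) < (1 / 2 + ε ^ 2 / 8) * (p : ℝ) ^ 2
  set B := univ.filter fun i : Fin p => (g i : ℝ) ≤ (1 / 2 - ε ^ 2 / 8) * (p : ℝ) ^ 2
  have hBA : B ⊆ A := by
    intro i hi
    simp only [A, B, mem_filter, mem_univ, true_and] at hi ⊢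
    nlinarith [sq_nonneg (ε * p)]
  set M := (A \ B).image g
  have hM_card : #M = #(A \ B) := card_image_of_injective _ hg.injective
  have hM_sidon : IsSidon M := (isSidon_range_of_modEq hsum).mono_s16 <| by
    simpa only [M, coe_image] using Set.image_subset_range _ _
  have hM_diff : ∀ x ∈ M, ∀ y ∈ M, (y - x : ℝ) ≤ (ε * p) ^ 2 / 4 := by
    simp only [M, mem_image, mem_sdiff, A, B, mem_filter, mem_univ, true_and, not_le]
    rintro _ ⟨i, ⟨-, hi⟩, rfl⟩ _ ⟨j, ⟨hj, -⟩, rfl⟩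
    nlinarith
  rw [← cast_card_sdiff hBA, ← hM_card]
  by_contra! h
  have h4 : 4 ≤ #M := by exact_mod_cast (show (4 : ℝ) ≤ #M by nlinarith)
  have := hM_sidon.sq_mul_card_sub_le hM_diff h4
  push_cast [Nat.cast_sub h4] at this
  nlinarith

theorem stmt_16 (ε : ℝ) (hε0 : 0 < ε) (hε1 : ε < 1) :
    ∃ P : ℕ, ∀ p : ℕ, p.Prime → P ≤ p →
      ∀ g : Fin p → ℤ, StrictMono g →
        (∀ i, g i ∈ Set.Icc (1 : ℤ) ((p : ℤ) ^ 2 - 1)) →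
        (∀ i j k l : Fin p, i ≤ j → k ≤ l →
          g i + g j ≡ g k + g l [ZMOD ((p : ℤ) ^ 2 - 1)] → i = k ∧ j = l) →
        ((Finset.univ.filter (fun i : Fin p =>
            ((g i : ℝ) < (1 / 2 + ε ^ 2 / 8) * (p : ℝ) ^ 2))).card : ℝ) -
        ((Finset.univ.filter (fun i : Fin p =>
            ((g i : ℝ) ≤ (1 / 2 - ε ^ 2 / 8) * (p : ℝ) ^ 2))).card : ℝ)
        ≤ 5 * ε / 8 * (p : ℝ) :=
  stmt_16_general ε hε0
end
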